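/- arXiv:2202.00387 — 4 statements merged into one kernel-verified Lean document; each statement's English description precedes it below -/
import Mathlib

section
/- Let {ℋ; ℰ; 𝒟_ℰ} be a quantized domain in a Hilbert space ℋ and let T ∈ C*(𝒟_ℰ). Then 𝒟_ℰ is contained in the domain of the Hilbert-space adjoint T★ of the densely defined operator T, and the restriction T★|_{𝒟_ℰ} again belongs to C*(𝒟_ℰ). Moreover, with the involution T* := T★|_{𝒟_ℰ}, C*(𝒟_ℰ) is a unital *-algebra. -/
open scoped ComplexOrder

noncomputable section

/-! ### Locally C*-algebras -/

/-- A C*-seminorm on a complex *-algebra: a submultiplicative *-invariant seminorm `p`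
with `p (a* a) = (p a)²`. -/
structure IsCStarSeminorm {A : Type*} [Ring A] [StarRing A] [Algebra ℂ A] (p : A → ℝ) :
    Prop where
  nonneg : ∀ a, 0 ≤ p a
  map_smul : ∀ (c : ℂ) (a : A), p (c • a) = ‖c‖ * p a
  add_le : ∀ a b, p (a + b) ≤ p a + p b
  mul_le : ∀ a b, p (a * b) ≤ p a * p b
  map_star : ∀ a, p (star a) = p a
  cstar : ∀ a, p (star a * a) = p a ^ 2

/-- The `Seminorm` associated with a C*-seminorm. -/
def IsCStarSeminorm.toSeminorm {A : Type*} [Ring A] [StarRing A] [Algebra ℂ A] {p : A → ℝ}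
    (h : IsCStarSeminorm p) : Seminorm ℂ A where
  toFun := p
  map_zero' := by simpa using h.map_smul 0 0
  add_le' := h.add_le
  neg' := fun a => by simpa using h.map_smul (-1) a
  smul' := h.map_smul

/-- `A` (a complete Hausdorff topological complex `*`-algebra) is a locally C*-algebra whose
topology is determined by the upward filtered family `p = {p_λ}_{λ ∈ Λ}` of C*-seminorms. -/
structure IsLocallyCStarAlgebra {A : Type*} {Λ : Type*} [Ring A] [StarRing A] [Algebra ℂ A]
    [StarModule ℂ A] [Nonempty Λ] [UniformSpace A] [IsUniformAddGroup A] (p : Λ → A → ℝ) :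
    Prop where
  cstarSeminorm : ∀ l, IsCStarSeminorm (p l)
  directed : ∀ l₁ l₂ : Λ, ∃ l₃, (∀ a, p l₁ a ≤ p l₃ a) ∧ (∀ a, p l₂ a ≤ p l₃ a)
  separating : ∀ a : A, (∀ l, p l a = 0) → a = 0
  withSeminorms : WithSeminorms (fun l => (cstarSeminorm l).toSeminorm)
  complete : CompleteSpace A

/-- The data of the induced C*-seminorms `p_λ^k` on the matrix algebras `M_k(A)`:
`pk k l` is a C*-seminorm on `M_k(A)` restricting to `p l` for `k = 1` and whose kernel is
`M_k(ker p_λ)` (these properties determine `p_λ^k` uniquely, `M_k(A_λ)` being a C*-algebra). -/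
structure IsMatrixCStarSeminormFamily {A : Type*} {Λ : Type*} [Ring A] [StarRing A]
    [Algebra ℂ A] (p : Λ → A → ℝ) (pk : ∀ k : ℕ, Λ → Matrix (Fin k) (Fin k) A → ℝ) :
    Prop where
  cstarSeminorm : ∀ k l, IsCStarSeminorm (pk k l)
  compat : ∀ l (M : Matrix (Fin 1) (Fin 1) A), pk 1 l M = p l (M 0 0)
  ker : ∀ k l (M : Matrix (Fin k) (Fin k) A), pk k l M = 0 ↔ ∀ i j, p l (M i j) = 0

/-- `a` is `λ`-positive (`a ≥_λ 0`) w.r.t. the C*-seminorm `p = p_λ`: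
`a = b* b + c` for some `b, c` with `p_λ c = 0`. -/
def LocalPositive {A : Type*} [Ring A] [StarRing A] (p : A → ℝ) (a : A) : Prop :=
  ∃ b c, p c = 0 ∧ a = star b * b + c

/-! ### Quantized domains and `C*(𝒟_ℰ)` -/

section Hilbert

variable {H : Type*} [NormedAddCommGroup H] [InnerProductSpace ℂ H]

/-- A quantized domain in a Hilbert space `H`: an upward filtered family of closed subspaces
whose union `𝒟_ℰ` is dense in `H`. -/
structure IsQuantizedDomain {ι : Type*} (E : ι → Submodule ℂ H) : Prop where
  closed : ∀ i, IsClosed (E i : Set H)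
  directed : Directed (· ≤ ·) E
  dense : Dense (⋃ i, (E i : Set H))

/-- A quantized Fréchet domain in a Hilbert space `H`: an increasing sequence of closed
subspaces whose union `𝒟_ℰ` is dense in `H`. -/
structure IsQuantizedFrechetDomain (E : ℕ → Submodule ℂ H) : Prop where
  closed : ∀ n, IsClosed (E n : Set H)
  mono : Monotone E
  dense : Dense (⋃ n, (E n : Set H))

/-- The inclusion of `ℋ_i` into the union space `𝒟_ℰ = ⋃ i, ℋ_i` (realized as `⨆ i, E i`). -/
def inclE {ι : Type*} (E : ι → Submodule ℂ H) (i : ι) (x : H) (hx : x ∈ E i) :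
    ↥(⨆ j, E j) := ⟨x, le_iSup E i hx⟩

/-- Membership in `C*(𝒟_ℰ)` for a linear operator `T` on the union space `𝒟_ℰ`, via the
characterization: every `ℋ_i` is `T`-invariant, every `ℋ_i^⊥ ∩ 𝒟_ℰ` is `T`-invariant, and
the restriction of `T` to every `ℋ_i` is bounded. -/
def MemCStar {ι : Type*} (E : ι → Submodule ℂ H)
    (T : ↥(⨆ i, E i) →ₗ[ℂ] ↥(⨆ i, E i)) : Prop :=
  ∀ i, (∀ x : ↥(⨆ j, E j), (x : H) ∈ E i → ((T x : H) ∈ E i)) ∧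
    (∀ x : ↥(⨆ j, E j), (x : H) ∈ (E i)ᗮ → ((T x : H) ∈ (E i)ᗮ)) ∧
    ∃ C : ℝ, ∀ x : ↥(⨆ j, E j), (x : H) ∈ E i → ‖(T x : H)‖ ≤ C * ‖x‖

/-- `S` is (the restriction to `𝒟_ℰ` of) the adjoint of `T`:
`⟪T x, y⟫ = ⟪x, S y⟫` for all `x, y ∈ 𝒟_ℰ`. -/
def IsAdjointOn {ι : Type*} (E : ι → Submodule ℂ H)
    (T S : ↥(⨆ i, E i) →ₗ[ℂ] ↥(⨆ i, E i)) : Prop :=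
  ∀ x y : ↥(⨆ i, E i), (inner ℂ ((T x : H)) ((y : H)) : ℂ) = inner ℂ ((x : H)) ((S y : H))

/-- The norm `‖T‖_i = ‖T|_{ℋ_i}‖ = sup {‖T x‖ : x ∈ ℋ_i, ‖x‖ ≤ 1}` of the restriction of
`T` to `ℋ_i`. -/
def restrictedNorm {ι : Type*} (E : ι → Submodule ℂ H) (i : ι)
    (T : ↥(⨆ j, E j) →ₗ[ℂ] ↥(⨆ j, E j)) : ℝ :=
  sSup ((fun x : ↥(⨆ j, E j) => ‖(T x : H)‖) '' {x | (x : H) ∈ E i ∧ ‖(x : H)‖ ≤ 1})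

section Complete

variable [CompleteSpace H]

/-- The orthogonal projection onto a closed subspace `K`, as an operator `H → H`. -/
def projCL (K : Submodule ℂ H) (hK : IsClosed (K : Set H)) : H →L[ℂ] H :=
  haveI : CompleteSpace K := hK.completeSpace_coe
  K.subtypeL.comp (K.orthogonalProjectionOnto)

theorem projCL_mem (K : Submodule ℂ H) (hK : IsClosed (K : Set H)) (x : H) :
    projCL K hK x ∈ K := by
  haveI : CompleteSpace K := hK.completeSpace_coe
  exact (K.orthogonalProjectionOnto x).2

/-- The orthogonal projection `P_i` of `H` onto `ℋ_i`, viewed as a map into `𝒟_ℰ`. -/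
def projD {ι : Type*} (E : ι → Submodule ℂ H) (hcl : ∀ i, IsClosed ((E i : Set H))) (i : ι)
    (x : H) : ↥(⨆ j, E j) :=
  inclE E i (projCL (E i) (hcl i) x) (projCL_mem _ _ _)

end Complete

/-! ### Local completely positive / completely contractive maps -/

variable {B : Type*} [Ring B] [StarRing B] [Algebra ℂ B] {Λ : Type*}

/-- `φ`, defined on the subspace `S` of `B` and with values in `C*(𝒟_ℰ)`, is local completely
positive: for every `n` there is `λ` such that for every `k`, the `k`-amplification
`φ⁽ᵏ⁾([a_ij]) = [φ(a_ij)]` restricted to `ℋ_n^k` is a positive operator whenever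
`[a_ij] ≥_λ 0`, and vanishes whenever `p_λ^k([a_ij]) = 0`. -/
def IsLocalCPOn {H : Type*} [NormedAddCommGroup H] [InnerProductSpace ℂ H] {ι : Type*}
    (pk : ∀ k : ℕ, Λ → Matrix (Fin k) (Fin k) B → ℝ)
    (E : ι → Submodule ℂ H) (S : Submodule ℂ B)
    (φ : ↥S →ₗ[ℂ] (↥(⨆ n, E n) →ₗ[ℂ] ↥(⨆ n, E n))) : Prop :=
  ∀ n : ι, ∃ l : Λ, ∀ (k : ℕ) (M : Matrix (Fin k) (Fin k) B) (hM : ∀ i j, M i j ∈ S),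
    (LocalPositive (pk k l) M →
      ∀ (ξ : Fin k → H) (hξ : ∀ i, ξ i ∈ E n),
        0 ≤ ∑ i, ∑ j, (inner ℂ (ξ i) ((φ ⟨M i j, hM i j⟩ (inclE E n (ξ j) (hξ j)) : H)) : ℂ)) ∧
    (pk k l M = 0 → ∀ (i j : Fin k) (x : H) (hx : x ∈ E n),
      (φ ⟨M i j, hM i j⟩ (inclE E n x hx) : H) = 0)

/-- `φ : B → C*(𝒟_ℰ)` is local completely positive. -/
def IsLocalCP {H : Type*} [NormedAddCommGroup H] [InnerProductSpace ℂ H] {ι : Type*}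
    (pk : ∀ k : ℕ, Λ → Matrix (Fin k) (Fin k) B → ℝ)
    (E : ι → Submodule ℂ H)
    (φ : B →ₗ[ℂ] (↥(⨆ n, E n) →ₗ[ℂ] ↥(⨆ n, E n))) : Prop :=
  ∀ n : ι, ∃ l : Λ, ∀ (k : ℕ) (M : Matrix (Fin k) (Fin k) B),
    (LocalPositive (pk k l) M →
      ∀ (ξ : Fin k → H) (hξ : ∀ i, ξ i ∈ E n),
        0 ≤ ∑ i, ∑ j, (inner ℂ (ξ i) ((φ (M i j) (inclE E n (ξ j) (hξ j)) : H)) : ℂ)) ∧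
    (pk k l M = 0 → ∀ (i j : Fin k) (x : H) (hx : x ∈ E n),
      (φ (M i j) (inclE E n x hx) : H) = 0)

/-- `φ`, defined on the subspace `S` of `B` and with values in `C*(𝒟_ℰ)`, is local completely
contractive: for every `n` there is `λ` such that
`‖φ⁽ᵏ⁾([a_ij])|_{ℋ_n^k}‖ ≤ p_λ^k([a_ij])` for every `k` and every `[a_ij] ∈ M_k` with entries
in `S` (expressed via `‖φ⁽ᵏ⁾([a_ij]) ξ‖² ≤ p_λ^k([a_ij])² ‖ξ‖²` for `ξ ∈ ℋ_n^k`). -/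
def IsLocalCCOn {H : Type*} [NormedAddCommGroup H] [InnerProductSpace ℂ H] {ι : Type*}
    (pk : ∀ k : ℕ, Λ → Matrix (Fin k) (Fin k) B → ℝ)
    (E : ι → Submodule ℂ H) (S : Submodule ℂ B)
    (φ : ↥S →ₗ[ℂ] (↥(⨆ n, E n) →ₗ[ℂ] ↥(⨆ n, E n))) : Prop :=
  ∀ n : ι, ∃ l : Λ, ∀ (k : ℕ) (M : Matrix (Fin k) (Fin k) B) (hM : ∀ i j, M i j ∈ S),
    ∀ (ξ : Fin k → H) (hξ : ∀ i, ξ i ∈ E n),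
      ∑ i, ‖∑ j, (φ ⟨M i j, hM i j⟩ (inclE E n (ξ j) (hξ j)) : H)‖ ^ 2 ≤
        pk k l M ^ 2 * ∑ j, ‖ξ j‖ ^ 2

/-- `φ : B → C*(𝒟_ℰ)` is local completely contractive. -/
def IsLocalCC {H : Type*} [NormedAddCommGroup H] [InnerProductSpace ℂ H] {ι : Type*}
    (pk : ∀ k : ℕ, Λ → Matrix (Fin k) (Fin k) B → ℝ)
    (E : ι → Submodule ℂ H)
    (φ : B →ₗ[ℂ] (↥(⨆ n, E n) →ₗ[ℂ] ↥(⨆ n, E n))) : Prop :=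
  ∀ n : ι, ∃ l : Λ, ∀ (k : ℕ) (M : Matrix (Fin k) (Fin k) B),
    ∀ (ξ : Fin k → H) (hξ : ∀ i, ξ i ∈ E n),
      ∑ i, ‖∑ j, (φ (M i j) (inclE E n (ξ j) (hξ j)) : H)‖ ^ 2 ≤
        pk k l M ^ 2 * ∑ j, ‖ξ j‖ ^ 2

/-- `φ`, defined on the subspace `S` of `B` and with values in `B(H)`, is local completely
positive (w.r.t. the trivial quantized domain `ℰ = {H}`, for which `C*(𝒟_ℰ) = B(H)`). -/
def IsLocalCPBOn {H : Type*} [NormedAddCommGroup H] [InnerProductSpace ℂ H]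
    (pk : ∀ k : ℕ, Λ → Matrix (Fin k) (Fin k) B → ℝ)
    (S : Submodule ℂ B) (φ : ↥S →ₗ[ℂ] (H →L[ℂ] H)) : Prop :=
  ∃ l : Λ, ∀ (k : ℕ) (M : Matrix (Fin k) (Fin k) B) (hM : ∀ i j, M i j ∈ S),
    (LocalPositive (pk k l) M →
      ∀ ξ : Fin k → H, 0 ≤ ∑ i, ∑ j, (inner ℂ (ξ i) (φ ⟨M i j, hM i j⟩ (ξ j)) : ℂ)) ∧
    (pk k l M = 0 → ∀ i j, φ ⟨M i j, hM i j⟩ = 0)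

/-- `φ : B → B(H)` is local completely positive (w.r.t. the trivial quantized domain
`ℰ = {H}`). -/
def IsLocalCPB {H : Type*} [NormedAddCommGroup H] [InnerProductSpace ℂ H]
    (pk : ∀ k : ℕ, Λ → Matrix (Fin k) (Fin k) B → ℝ)
    (φ : B →ₗ[ℂ] (H →L[ℂ] H)) : Prop :=
  ∃ l : Λ, ∀ (k : ℕ) (M : Matrix (Fin k) (Fin k) B),
    (LocalPositive (pk k l) M →
      ∀ ξ : Fin k → H, 0 ≤ ∑ i, ∑ j, (inner ℂ (ξ i) (φ (M i j) (ξ j)) : ℂ)) ∧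
    (pk k l M = 0 → ∀ i j, φ (M i j) = 0)

end Hilbert

/-! ### The `2 × 2` constructions -/

section Two

variable {H : Type*} [NormedAddCommGroup H] [InnerProductSpace ℂ H]

/-- The quantized domain `ℰ ⊕ ℰ = {ℋ_n ⊕ ℋ_n}` in `H ⊕ H` (modeled as `PiLp 2` over
`Fin 2`). -/
def E2 {ι : Type*} (E : ι → Submodule ℂ H) (n : ι) : Submodule ℂ (PiLp 2 fun _ : Fin 2 => H) where
  carrier := {v | ∀ j, v j ∈ E n}
  add_mem' := fun hv hw j => (E n).add_mem (hv j) (hw j)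
  zero_mem' := fun _ => (E n).zero_mem
  smul_mem' := fun c _ hv j => (E n).smul_mem c (hv j)

theorem E2_directed {ι : Type*} {E : ι → Submodule ℂ H} (hE : Directed (· ≤ ·) E) :
    Directed (· ≤ ·) (E2 E) := fun i j =>
  let ⟨k, h1, h2⟩ := hE i j
  ⟨k, fun _ hv l => h1 (hv l), fun _ hv l => h2 (hv l)⟩

/-- The `j`-th component map `𝒟_{ℰ⊕ℰ} → 𝒟_ℰ`. -/
def cmpD {ι : Type*} [Nonempty ι] (E : ι → Submodule ℂ H) (hE : Directed (· ≤ ·) E)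
    (j : Fin 2) : ↥(⨆ n, E2 E n) →ₗ[ℂ] ↥(⨆ n, E n) where
  toFun v := ⟨(v : PiLp 2 fun _ : Fin 2 => H) j, by
    obtain ⟨n, hn⟩ := (Submodule.mem_iSup_of_directed _ (E2_directed hE)).mp v.2
    exact le_iSup E n (hn j)⟩
  map_add' v w := Subtype.ext rfl
  map_smul' c v := Subtype.ext rfl

end Two

section Mat2

variable {A : Type*} [Ring A] [StarRing A] [Algebra ℂ A] {Λ : Type*}

/-- The canonical identification of `M_k(M₂(A))` with `M_{2k}(A)`. -/
def matFlatten (k : ℕ) (X : Matrix (Fin k) (Fin k) (Matrix (Fin 2) (Fin 2) A)) :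
    Matrix (Fin (k * 2)) (Fin (k * 2)) A :=
  Matrix.of fun i j =>
    X (finProdFinEquiv.symm i).1 (finProdFinEquiv.symm j).1
      (finProdFinEquiv.symm i).2 (finProdFinEquiv.symm j).2

/-- The C*-seminorms `p_λ^k` on the matrix algebras `M_k(M₂(A))`, obtained from the
C*-seminorms `p_λ^{2k}` on `M_{2k}(A)` via the canonical identification. -/
def pk2 (pk : ∀ k : ℕ, Λ → Matrix (Fin k) (Fin k) A → ℝ) (k : ℕ) (l : Λ)
    (X : Matrix (Fin k) (Fin k) (Matrix (Fin 2) (Fin 2) A)) : ℝ :=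
  pk (k * 2) l (matFlatten k X)

variable [StarModule ℂ A]

/-- The local operator system `S_M ⊆ M₂(A)` associated with a local operator space `M ⊆ A`:
all matrices `[[α·1, a], [b*, β·1]]` with `α, β ∈ ℂ` and `a, b ∈ M`. -/
def SM (M : Submodule ℂ A) : Submodule ℂ (Matrix (Fin 2) (Fin 2) A) where
  carrier := {X | X 0 0 ∈ Submodule.span ℂ ({1} : Set A) ∧
    X 1 1 ∈ Submodule.span ℂ ({1} : Set A) ∧ X 0 1 ∈ M ∧ star (X 1 0) ∈ M}
  add_mem' := fun {X Y} hX hY =>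
    ⟨add_mem hX.1 hY.1, add_mem hX.2.1 hY.2.1, add_mem hX.2.2.1 hY.2.2.1, by
      rw [Matrix.add_apply, star_add]; exact add_mem hX.2.2.2 hY.2.2.2⟩
  zero_mem' := ⟨zero_mem _, zero_mem _, zero_mem _, by
    rw [Matrix.zero_apply, star_zero]; exact zero_mem _⟩
  smul_mem' := fun c X hX =>
    ⟨Submodule.smul_mem _ c hX.1, Submodule.smul_mem _ c hX.2.1,
      Submodule.smul_mem _ c hX.2.2.1, by
      rw [Matrix.smul_apply, star_smul]; exact Submodule.smul_mem _ _ hX.2.2.2⟩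

end Mat2

/-- A linear operator on `𝒟_ℰ`, viewed as a densely defined (partial) linear operator
on `H`. -/
def toPMap {H : Type*} [NormedAddCommGroup H] [InnerProductSpace ℂ H] {ι : Type*}
    (E : ι → Submodule ℂ H) (T : ↥(⨆ i, E i) →ₗ[ℂ] ↥(⨆ i, E i)) : H →ₗ.[ℂ] H :=
  ⟨⨆ i, E i, (⨆ i, E i).subtype ∘ₗ T⟩

/-! For `y ∈ ℋ_i` the functional `x ↦ ⟪y, T x⟫` on `𝒟_ℰ` only sees `P_i x`, because `T` maps
`𝒟_ℰ ∩ ℋ_iᗮ` into `ℋ_iᗮ`. It is therefore represented by `(T P_i)* y`, a vector of `ℋ_i` of norm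
at most `‖T P_i‖ ‖y‖`. Hence `𝒟_ℰ ⊆ dom T★`, and by density every formal adjoint of `T` on `𝒟_ℰ`
coincides with `(T P_i)*` on `ℋ_i`; invariance of `ℋ_iᗮ` under it is dual to the invariance of
`ℋ_i` under `T`. -/

open scoped InnerProductSpace

section CStarDomain

variable {H : Type*} [NormedAddCommGroup H] [InnerProductSpace ℂ H] {ι : Type*}
  {E : ι → Submodule ℂ H}

theorem IsQuantizedDomain.dense_iSup (hE : IsQuantizedDomain E) :
    Dense ((⨆ i, E i : Submodule ℂ H) : Set H) :=
  hE.dense.mono (Set.iUnion_subset fun i => SetLike.coe_subset_coe.2 (le_iSup E i))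

theorem memCStar_id : MemCStar E (LinearMap.id : ↥(⨆ i, E i) →ₗ[ℂ] ↥(⨆ i, E i)) :=
  fun _ => ⟨fun _ hx => hx, fun _ hx => hx, 1, fun x _ => by simp⟩

namespace MemCStar

variable {T S T₁ T₂ : ↥(⨆ i, E i) →ₗ[ℂ] ↥(⨆ i, E i)}

theorem exists_nonneg_bound (hT : MemCStar E T) (i : ι) :
    ∃ C, 0 ≤ C ∧ ∀ x : ↥(⨆ j, E j), (x : H) ∈ E i → ‖(T x : H)‖ ≤ C * ‖x‖ := by
  obtain ⟨C, hC⟩ := (hT i).2.2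
  exact ⟨max C 0, le_max_right _ _, fun x hx =>
    (hC x hx).trans (mul_le_mul_of_nonneg_right (le_max_left _ _) (norm_nonneg _))⟩

theorem add (h₁ : MemCStar E T₁) (h₂ : MemCStar E T₂) : MemCStar E (T₁ + T₂) := by
  intro i
  obtain ⟨C₁, hC₁⟩ := (h₁ i).2.2
  obtain ⟨C₂, hC₂⟩ := (h₂ i).2.2
  refine ⟨fun x hx => add_mem ((h₁ i).1 x hx) ((h₂ i).1 x hx),
    fun x hx => add_mem ((h₁ i).2.1 x hx) ((h₂ i).2.1 x hx), C₁ + C₂, fun x hx => ?_⟩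
  calc ‖(T₁ x : H) + T₂ x‖ ≤ ‖(T₁ x : H)‖ + ‖(T₂ x : H)‖ := norm_add_le _ _
    _ ≤ C₁ * ‖x‖ + C₂ * ‖x‖ := add_le_add (hC₁ x hx) (hC₂ x hx)
    _ = (C₁ + C₂) * ‖x‖ := by ring

theorem comp (h₁ : MemCStar E T₁) (h₂ : MemCStar E T₂) : MemCStar E (T₁ ∘ₗ T₂) := by
  intro i
  obtain ⟨C₁, hC₁₀, hC₁⟩ := h₁.exists_nonneg_bound i
  obtain ⟨C₂, hC₂⟩ := (h₂ i).2.2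
  refine ⟨fun x hx => (h₁ i).1 _ ((h₂ i).1 x hx),
    fun x hx => (h₁ i).2.1 _ ((h₂ i).2.1 x hx), C₁ * C₂, fun x hx => ?_⟩
  calc ‖(T₁ (T₂ x) : H)‖ ≤ C₁ * ‖T₂ x‖ := hC₁ _ ((h₂ i).1 x hx)
    _ ≤ C₁ * (C₂ * ‖x‖) := mul_le_mul_of_nonneg_left (hC₂ x hx) hC₁₀
    _ = C₁ * C₂ * ‖x‖ := by ring

theorem smul (h : MemCStar E T) (c : ℂ) : MemCStar E (c • T) := by
  intro i
  obtain ⟨C, hC⟩ := (h i).2.2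
  refine ⟨fun x hx => Submodule.smul_mem _ c ((h i).1 x hx),
    fun x hx => Submodule.smul_mem _ c ((h i).2.1 x hx), ‖c‖ * C, fun x hx => ?_⟩
  calc ‖c • (T x : H)‖ = ‖c‖ * ‖(T x : H)‖ := norm_smul _ _
    _ ≤ ‖c‖ * (C * ‖x‖) := mul_le_mul_of_nonneg_left (hC x hx) (norm_nonneg c)
    _ = ‖c‖ * C * ‖x‖ := by ring

section Projection

variable (i : ι) [(E i).HasOrthogonalProjection]

theorem inner_apply_eq_inner_apply_orthogonalProjectionOnto (hT : MemCStar E T)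
    (x : ↥(⨆ j, E j)) {y : H} (hy : y ∈ E i) :
    ⟪y, T x⟫_ℂ =
      ⟪y, T (Submodule.inclusion (le_iSup E i) ((E i).orthogonalProjectionOnto x))⟫_ℂ := by
  set p := Submodule.inclusion (le_iSup E i) ((E i).orthogonalProjectionOnto (x : H))
  have hq : ((x - p : ↥(⨆ j, E j)) : H) ∈ (E i)ᗮ := (E i).sub_starProjection_mem_orthogonal x
  have h0 : ⟪y, T (x - p)⟫_ℂ = 0 := (Submodule.mem_orthogonal _ _).1 ((hT i).2.1 _ hq) y hy
  rwa [map_sub, Submodule.coe_sub, inner_sub_right, sub_eq_zero] at h0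

theorem exists_continuousLinearMap_inner_eq [CompleteSpace H] (hT : MemCStar E T) :
    ∃ B : H →L[ℂ] H, (∀ y, B y ∈ E i) ∧
      ∀ (x : ↥(⨆ j, E j)) {y : H}, y ∈ E i → ⟪B y, x⟫_ℂ = ⟪y, T x⟫_ℂ := by
  obtain ⟨C, hC₀, hC⟩ := hT.exists_nonneg_bound i
  let P : H →ₗ[ℂ] ↥(⨆ j, E j) :=
    Submodule.inclusion (le_iSup E i) ∘ₗ ((E i).orthogonalProjectionOnto : H →ₗ[ℂ] E i)
  let A : H →ₗ[ℂ] H := (⨆ j, E j).subtype ∘ₗ T ∘ₗ P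
  have hA : ∀ u, ‖A u‖ ≤ C * ‖u‖ := fun u =>
    (hC (P u) ((E i).orthogonalProjectionOnto u).2).trans
      (mul_le_mul_of_nonneg_left ((E i).norm_starProjection_apply_le u) hC₀)
  refine ⟨ContinuousLinearMap.adjoint (A.mkContinuous C hA), fun y => ?_, fun x y hy => ?_⟩
  · rw [← (E i).orthogonal_orthogonal, Submodule.mem_orthogonal]
    intro u hu
    have hPu : P u = 0 := by
      simp [P, (E i).orthogonalProjectionOnto_eq_zero_iff.2 hu]
    rw [ContinuousLinearMap.adjoint_inner_right, LinearMap.mkContinuous_apply]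
    simp [A, hPu]
  · rw [ContinuousLinearMap.adjoint_inner_left,
      hT.inner_apply_eq_inner_apply_orthogonalProjectionOnto i x hy]
    rfl

end Projection

variable [CompleteSpace H]

theorem of_isAdjointOn (hE : IsQuantizedDomain E) (hT : MemCStar E T)
    (hadj : IsAdjointOn E T S) : MemCStar E S := by
  intro i
  have : CompleteSpace (E i) := (hE.closed i).completeSpace_coe
  obtain ⟨B, hBmem, hB⟩ := hT.exists_continuousLinearMap_inner_eq i
  have hSB : ∀ y : ↥(⨆ j, E j), (y : H) ∈ E i → (S y : H) = B y := fun y hy =>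
    hE.dense_iSup.eq_of_inner_right ℂ fun x hx => (hadj ⟨x, hx⟩ y).symm.trans <| by
      rw [← inner_conj_symm, ← hB ⟨x, hx⟩ hy, inner_conj_symm]
  refine ⟨fun y hy => hSB y hy ▸ hBmem y, fun y hy => ?_, ‖B‖, fun y hy => ?_⟩
  · refine (Submodule.mem_orthogonal _ _).2 fun u hu => ?_
    rw [← hadj ⟨u, le_iSup E i hu⟩ y]
    exact (Submodule.mem_orthogonal _ _).1 hy _ ((hT i).1 _ hu)
  · rw [hSB y hy]
    exact B.le_opNorm _

theorem exists_mem_adjoint_domain [Nonempty ι] (hE : IsQuantizedDomain E) (hT : MemCStar E T)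
    {y : H} (hy : y ∈ ⨆ i, E i) :
    ∃ hy' : y ∈ (LinearPMap.adjoint (toPMap E T)).domain,
      (LinearPMap.adjoint (toPMap E T) ⟨y, hy'⟩ : H) ∈ ⨆ i, E i := by
  obtain ⟨i, hi⟩ := (Submodule.mem_iSup_of_directed E hE.directed).1 hy
  have : CompleteSpace (E i) := (hE.closed i).completeSpace_coe
  obtain ⟨B, hBmem, hB⟩ := hT.exists_continuousLinearMap_inner_eq i
  refine ⟨LinearPMap.mem_adjoint_domain_of_exists y ⟨B y, fun x => hB x hi⟩, ?_⟩
  rw [LinearPMap.adjoint_apply_eq hE.dense_iSup _ fun x => hB x hi]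
  exact le_iSup E i (hBmem y)

end MemCStar

end CStarDomain

theorem statement_2 {H : Type*} [NormedAddCommGroup H] [InnerProductSpace ℂ H]
    [CompleteSpace H] {ι : Type*} [Nonempty ι] {E : ι → Submodule ℂ H}
    (hE : IsQuantizedDomain E) (T : ↥(⨆ i, E i) →ₗ[ℂ] ↥(⨆ i, E i)) (hT : MemCStar E T) :
    -- `𝒟_ℰ ⊆ dom T★`
    ((⨆ i, E i) ≤ (LinearPMap.adjoint (toPMap E T)).domain) ∧
    -- `T★|_{𝒟_ℰ} ∈ C*(𝒟_ℰ)`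
    (∃ S : ↥(⨆ i, E i) →ₗ[ℂ] ↥(⨆ i, E i), MemCStar E S ∧
      ∀ (y : ↥(⨆ i, E i)) (hy : (y : H) ∈ (LinearPMap.adjoint (toPMap E T)).domain),
        (S y : H) = LinearPMap.adjoint (toPMap E T) ⟨(y : H), hy⟩) ∧
    -- `C*(𝒟_ℰ)` is a unital *-algebra:
    MemCStar E (LinearMap.id : ↥(⨆ i, E i) →ₗ[ℂ] ↥(⨆ i, E i)) ∧
    (∀ T₁ T₂ : ↥(⨆ i, E i) →ₗ[ℂ] ↥(⨆ i, E i), MemCStar E T₁ → MemCStar E T₂ →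
      MemCStar E (T₁ + T₂) ∧ MemCStar E (T₁ ∘ₗ T₂)) ∧
    (∀ (c : ℂ) (T₁ : ↥(⨆ i, E i) →ₗ[ℂ] ↥(⨆ i, E i)), MemCStar E T₁ →
      MemCStar E (c • T₁)) ∧
    (∀ T₁ S₁ : ↥(⨆ i, E i) →ₗ[ℂ] ↥(⨆ i, E i), MemCStar E T₁ → IsAdjointOn E T₁ S₁ →
      MemCStar E S₁) := by
  choose hdom hmem using fun y (hy : y ∈ ⨆ i, E i) => hT.exists_mem_adjoint_domain hE hy
  have hle : (⨆ i, E i) ≤ (LinearPMap.adjoint (toPMap E T)).domain := fun y hy => hdom y hy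
  let S : ↥(⨆ i, E i) →ₗ[ℂ] ↥(⨆ i, E i) :=
    ((LinearPMap.adjoint (toPMap E T)).toFun ∘ₗ Submodule.inclusion hle).codRestrict _
      fun y => hmem y y.2
  have hadj : IsAdjointOn E T S := fun x y =>
    (LinearPMap.adjoint_isFormalAdjoint (T := toPMap E T) hE.dense_iSup).symm x ⟨y, hle y.2⟩
  exact ⟨hle, ⟨S, hT.of_isAdjointOn hE hadj, fun _ _ => rfl⟩, memCStar_id,
    fun _ _ h₁ h₂ => ⟨h₁.add h₂, h₁.comp h₂⟩, fun c _ h => h.smul c,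
    fun _ _ h hadj => h.of_isAdjointOn hE hadj⟩
end
end

section
/- Let {ℋ; ℰ; 𝒟_ℰ} be a quantized domain in a Hilbert space ℋ, with ℰ = {ℋ_ι : ι ∈ Υ}. The C*-algebra b(C*(𝒟_ℰ)) of bounded elements of C*(𝒟_ℰ) is isometrically *-isomorphic to the C*-algebra {T ∈ B(ℋ) : P_ι T = T P_ι for all ι ∈ Υ} via the map T ↦ T̃, where T̃ is the unique bounded extension of T from 𝒟_ℰ to ℋ. -/
open scoped ComplexOrder

noncomputable section

/-!
`T̃` is the extension by continuity of `T` from the dense domain `𝒟_ℰ = ⨆ ι, ℋ_ι`; every identity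
between operators on `𝒟_ℰ` (sums, scalar multiples, products, adjoints, commutation with `P_ι`)
passes to the extensions, both sides being continuous and equal on a dense set. For `y ∈ 𝒟_ℰ` the
splitting `y = P_ι y + (y - P_ι y)` has both summands in `𝒟_ℰ`, in `ℋ_ι` and `ℋ_ιᗮ` respectively,
and `T` preserves both, so `T̃` commutes with `P_ι`. Conversely, an operator commuting with `P_ι`
leaves `ℋ_ι` and `ℋ_ιᗮ` invariant, hence restricts to an element of `C*(𝒟_ℰ)`. Since every vector
of `𝒟_ℰ` lies in some `ℋ_ι`, `‖T̃‖ = sup_ι ‖T‖_ι`.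
-/

open Module.End

section StarProjection

variable {𝕜 E : Type*} [RCLike 𝕜] [NormedAddCommGroup E] [InnerProductSpace 𝕜 E]
  (K : Submodule 𝕜 E) [K.HasOrthogonalProjection]

theorem Submodule.commute_starProjection_iff {B : E →L[𝕜] E} :
    Commute K.starProjection B ↔
      K ∈ invtSubmodule (B : E →ₗ[𝕜] E) ∧ Kᗮ ∈ invtSubmodule (B : E →ₗ[𝕜] E) := by
  have h := LinearMap.IsIdempotentElem.commute_iff (T := (B : E →ₗ[𝕜] E))
    (ContinuousLinearMap.IsIdempotentElem.toLinearMap K.isIdempotentElem_starProjection)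
  have hrange : LinearMap.range (K.starProjection : E →ₗ[𝕜] E) = K := K.range_starProjection
  have hker : LinearMap.ker (K.starProjection : E →ₗ[𝕜] E) = Kᗮ := K.ker_starProjection
  rw [hrange, hker] at h
  rw [← h, commute_iff_eq, commute_iff_eq, ← ContinuousLinearMap.toLinearMap_mul,
    ← ContinuousLinearMap.toLinearMap_mul, ContinuousLinearMap.coe_inj]

theorem Submodule.map_starProjection_eq {B : E →L[𝕜] E} {y : E}
    (h₁ : B (K.starProjection y) ∈ K) (h₂ : B (y - K.starProjection y) ∈ Kᗮ) :
    B (K.starProjection y) = K.starProjection (B y) := by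
  have hy : B y = B (K.starProjection y) + B (y - K.starProjection y) := by
    rw [← map_add, add_sub_cancel]
  rw [hy, map_add, K.starProjection_eq_self_iff.mpr h₁,
    K.starProjection_apply_eq_zero_iff.mpr h₂, add_zero]

end StarProjection

theorem ContinuousLinearMap.eq_adjoint_of_dense {𝕜 E F : Type*} [RCLike 𝕜]
    [NormedAddCommGroup E] [InnerProductSpace 𝕜 E] [CompleteSpace E]
    [NormedAddCommGroup F] [InnerProductSpace 𝕜 F] [CompleteSpace F]
    {s : Set E} {t : Set F} (hs : Dense s) (ht : Dense t) {A : E →L[𝕜] F} {B : F →L[𝕜] E}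
    (h : ∀ x ∈ s, ∀ y ∈ t, inner 𝕜 (A x) y = inner 𝕜 x (B y)) : A = adjoint B := by
  have hAB := Continuous.ext_on (hs.prod ht) (f := fun p : E × F => inner 𝕜 (A p.1) p.2)
    (g := fun p => inner 𝕜 p.1 (B p.2)) (by fun_prop) (by fun_prop)
    fun p hp => h _ hp.1 _ hp.2
  exact (eq_adjoint_iff A B).2 fun x y => congrFun hAB (x, y)

section DenseSubmodule

variable {𝕜 F G : Type*} [NontriviallyNormedField 𝕜] [NormedAddCommGroup F] [NormedSpace 𝕜 F]
  {V : Submodule 𝕜 F}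

theorem ContinuousLinearMap.ext_on_submodule [TopologicalSpace G] [T2Space G] [AddCommMonoid G]
    [Module 𝕜 G] (hV : Dense (V : Set F)) {f g : F →L[𝕜] G} (h : ∀ x : V, f x = g x) : f = g :=
  ContinuousLinearMap.ext_on (by rwa [Submodule.span_eq]) fun x hx => h ⟨x, hx⟩

variable [CompleteSpace F]

/-- Extension by continuity; junk unless `V` is dense and `T` is bounded. -/
def Submodule.extendOperator (V : Submodule 𝕜 F) (T : V →ₗ[𝕜] V) : F →L[𝕜] F :=
  (V.subtype ∘ₗ T).extendOfNorm V.subtype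

namespace Submodule

theorem extendOperator_apply (hV : Dense (V : Set F)) {T : V →ₗ[𝕜] V}
    (hT : ∃ C, ∀ x, ‖(T x : F)‖ ≤ C * ‖x‖) (x : V) : V.extendOperator T x = T x :=
  LinearMap.extendOfNorm_eq hV.denseRange_val hT x

theorem extendOperator_eq (hV : Dense (V : Set F)) {T : V →ₗ[𝕜] V} {B : F →L[𝕜] F}
    (h : ∀ x : V, B x = T x) : V.extendOperator T = B :=
  ContinuousLinearMap.ext_on_submodule hV fun x =>
    (extendOperator_apply hV ⟨‖B‖, fun x => h x ▸ B.le_opNorm x⟩ x).trans (h x).symm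

theorem eq_of_extendOperator_eq (hV : Dense (V : Set F)) {T S : V →ₗ[𝕜] V}
    (hT : ∃ C, ∀ x, ‖(T x : F)‖ ≤ C * ‖x‖) (hS : ∃ C, ∀ x, ‖(S x : F)‖ ≤ C * ‖x‖)
    (h : V.extendOperator T = V.extendOperator S) : T = S := by
  ext x
  rw [← extendOperator_apply hV hT, ← extendOperator_apply hV hS, h]

theorem extendOperator_add (hV : Dense (V : Set F)) {T S : V →ₗ[𝕜] V}
    (hT : ∃ C, ∀ x, ‖(T x : F)‖ ≤ C * ‖x‖) (hS : ∃ C, ∀ x, ‖(S x : F)‖ ≤ C * ‖x‖) :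
    V.extendOperator (T + S) = V.extendOperator T + V.extendOperator S :=
  extendOperator_eq hV fun x => by
    simp [extendOperator_apply hV hT, extendOperator_apply hV hS]

theorem extendOperator_smul (hV : Dense (V : Set F)) {T : V →ₗ[𝕜] V}
    (hT : ∃ C, ∀ x, ‖(T x : F)‖ ≤ C * ‖x‖) (c : 𝕜) :
    V.extendOperator (c • T) = c • V.extendOperator T :=
  extendOperator_eq hV fun x => by simp [extendOperator_apply hV hT]

theorem extendOperator_comp (hV : Dense (V : Set F)) {T S : V →ₗ[𝕜] V}
    (hT : ∃ C, ∀ x, ‖(T x : F)‖ ≤ C * ‖x‖) (hS : ∃ C, ∀ x, ‖(S x : F)‖ ≤ C * ‖x‖) :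
    V.extendOperator (T ∘ₗ S) = (V.extendOperator T).comp (V.extendOperator S) :=
  extendOperator_eq hV fun x => by
    simp [extendOperator_apply hV hT, extendOperator_apply hV hS]

end Submodule

end DenseSubmodule

section QuantizedDomain

variable {H : Type*} [NormedAddCommGroup H] [InnerProductSpace ℂ H] {ι : Type*}
  {E : ι → Submodule ℂ H}

theorem restrictedNorm_nonneg (i : ι) (T : ↥(⨆ j, E j) →ₗ[ℂ] ↥(⨆ j, E j)) :
    0 ≤ restrictedNorm E i T :=
  Real.sSup_nonneg (by rintro _ ⟨x, -, rfl⟩; exact norm_nonneg _)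

theorem restrictedNorm_le {i : ι} {T : ↥(⨆ j, E j) →ₗ[ℂ] ↥(⨆ j, E j)} {C : ℝ} (hC : 0 ≤ C)
    (h : ∀ x : ↥(⨆ j, E j), (x : H) ∈ E i → ‖(T x : H)‖ ≤ C * ‖x‖) :
    restrictedNorm E i T ≤ C :=
  Real.sSup_le (by
    rintro _ ⟨x, ⟨hxi, hx1⟩, rfl⟩
    exact (h x hxi).trans (mul_le_of_le_one_right hC hx1)) hC

theorem norm_apply_le_restrictedNorm_mul {i : ι} {T : ↥(⨆ j, E j) →ₗ[ℂ] ↥(⨆ j, E j)} {C : ℝ}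
    (hT : ∀ x : ↥(⨆ j, E j), (x : H) ∈ E i → ‖(T x : H)‖ ≤ C * ‖x‖)
    {x : ↥(⨆ j, E j)} (hx : (x : H) ∈ E i) : ‖(T x : H)‖ ≤ restrictedNorm E i T * ‖x‖ := by
  rcases eq_or_ne x 0 with rfl | hx0
  · simp
  have hbdd : BddAbove ((fun x : ↥(⨆ j, E j) => ‖(T x : H)‖) ''
      {x | (x : H) ∈ E i ∧ ‖(x : H)‖ ≤ 1}) := by
    refine ⟨max C 0, ?_⟩
    rintro _ ⟨y, ⟨hyi, hy1⟩, rfl⟩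
    exact (hT y hyi).trans <| (mul_le_mul_of_nonneg_right (le_max_left C 0) (norm_nonneg y)).trans
      (mul_le_of_le_one_right (le_max_right C 0) hy1)
  have hx' : 0 < ‖x‖ := norm_pos_iff.mpr hx0
  set u := ((‖x‖⁻¹ : ℝ) : ℂ) • x
  have hu : ‖(T u : H)‖ ≤ restrictedNorm E i T := by
    refine le_csSup hbdd ⟨u, ⟨(E i).smul_mem _ hx, ?_⟩, rfl⟩
    simpa [u, norm_smul] using (inv_mul_cancel₀ hx'.ne').le
  have hTu : ‖(T u : H)‖ = ‖x‖⁻¹ * ‖(T x : H)‖ := by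
    simp [u, norm_smul]
  rw [hTu, inv_mul_le_iff₀ hx'] at hu
  linarith

namespace IsQuantizedDomain

theorem dense_iSup_s4 (hE : IsQuantizedDomain E) : Dense ((⨆ i, E i : Submodule ℂ H) : Set H) :=
  hE.dense.mono (Set.iUnion_subset fun i _ hx => le_iSup E i hx)

theorem nonempty (hE : IsQuantizedDomain E) : Nonempty ι :=
  let ⟨_, hx⟩ := hE.dense.nonempty
  ⟨(Set.mem_iUnion.1 hx).choose⟩

theorem exists_mem (hE : IsQuantizedDomain E) (x : ↥(⨆ i, E i)) : ∃ i, (x : H) ∈ E i :=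
  have := hE.nonempty
  (Submodule.mem_iSup_of_directed _ hE.directed).mp x.2

theorem norm_eq_sSup_restrictedNorm (hE : IsQuantizedDomain E)
    {T : ↥(⨆ i, E i) →ₗ[ℂ] ↥(⨆ i, E i)} {B : H →L[ℂ] H} (hB : ∀ x : ↥(⨆ i, E i), B x = T x) :
    ‖B‖ = sSup (Set.range fun i : ι => restrictedNorm E i T) := by
  have hbound : ∀ x : ↥(⨆ i, E i), ‖(T x : H)‖ ≤ ‖B‖ * ‖x‖ := fun x =>
    hB x ▸ B.le_opNorm x
  have hle : ∀ i, restrictedNorm E i T ≤ ‖B‖ := fun i =>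
    restrictedNorm_le (norm_nonneg B) fun x _ => hbound x
  have hbdd : BddAbove (Set.range fun i : ι => restrictedNorm E i T) :=
    ⟨‖B‖, Set.forall_mem_range.2 hle⟩
  refine le_antisymm ?_ (Real.sSup_le (Set.forall_mem_range.2 hle) (norm_nonneg B))
  have hnonneg : 0 ≤ sSup (Set.range fun i : ι => restrictedNorm E i T) :=
    Real.sSup_nonneg (Set.forall_mem_range.2 fun i => restrictedNorm_nonneg i T)
  refine B.opNorm_le_bound hnonneg fun y =>
    hE.dense_iSup_s4.induction (fun z hz => ?_) (isClosed_le (by fun_prop) (by fun_prop)) y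
  obtain ⟨i, hi⟩ := hE.exists_mem ⟨z, hz⟩
  calc ‖B z‖ = ‖(T ⟨z, hz⟩ : H)‖ := by rw [← hB]
    _ ≤ restrictedNorm E i T * ‖z‖ :=
      norm_apply_le_restrictedNorm_mul (fun x _ => hbound x) hi
    _ ≤ _ := by gcongr; exact le_csSup hbdd ⟨i, rfl⟩

variable [CompleteSpace H]

theorem hasOrthogonalProjection (hE : IsQuantizedDomain E) (i : ι) :
    (E i).HasOrthogonalProjection :=
  have := (hE.closed i).completeSpace_coe
  inferInstance

theorem projCL_eq_starProjection (hE : IsQuantizedDomain E) (i : ι) :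
    projCL (E i) (hE.closed i) = @Submodule.starProjection _ _ _ _ _ (E i)
      (hE.hasOrthogonalProjection i) :=
  rfl

theorem map_projCL_of_memCStar (hE : IsQuantizedDomain E) {T : ↥(⨆ i, E i) →ₗ[ℂ] ↥(⨆ i, E i)}
    (hT : MemCStar E T) {B : H →L[ℂ] H} (hB : ∀ x : ↥(⨆ i, E i), B x = T x) (i : ι) (y : H) :
    B (projCL (E i) (hE.closed i) y) = projCL (E i) (hE.closed i) (B y) := by
  have := hE.hasOrthogonalProjection i
  rw [hE.projCL_eq_starProjection]
  refine hE.dense_iSup_s4.induction (fun y hy => ?_) (isClosed_eq (by fun_prop) (by fun_prop)) y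
  have hPy : (E i).starProjection y ∈ E i := (E i).starProjection_apply_mem y
  have hPyD : (E i).starProjection y ∈ ⨆ i, E i := le_iSup E i hPy
  refine (E i).map_starProjection_eq ?_ ?_
  · rw [hB ⟨_, hPyD⟩]
    exact (hT i).1 _ hPy
  · rw [hB ⟨_, sub_mem hy hPyD⟩]
    exact (hT i).2.1 _ ((E i).sub_starProjection_mem_orthogonal y)

theorem mem_invtSubmodule_of_map_projCL (hE : IsQuantizedDomain E) {B : H →L[ℂ] H} {i : ι}
    (hB : ∀ y, B (projCL (E i) (hE.closed i) y) = projCL (E i) (hE.closed i) (B y)) :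
    E i ∈ invtSubmodule (B : H →ₗ[ℂ] H) ∧ (E i)ᗮ ∈ invtSubmodule (B : H →ₗ[ℂ] H) := by
  have := hE.hasOrthogonalProjection i
  rw [hE.projCL_eq_starProjection] at hB
  exact (E i).commute_starProjection_iff.mp (ContinuousLinearMap.ext fun y => (hB y).symm)

theorem iSup_mem_invtSubmodule_of_map_projCL (hE : IsQuantizedDomain E) {B : H →L[ℂ] H}
    (hB : ∀ i y, B (projCL (E i) (hE.closed i) y) = projCL (E i) (hE.closed i) (B y)) :
    ⨆ i, E i ∈ invtSubmodule (B : H →ₗ[ℂ] H) := iSup_le fun i =>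
  (hE.mem_invtSubmodule_of_map_projCL (hB i)).1.trans (Submodule.comap_mono (le_iSup E i))

theorem memCStar_restrict_of_map_projCL (hE : IsQuantizedDomain E) {B : H →L[ℂ] H}
    (hB : ∀ i y, B (projCL (E i) (hE.closed i) y) = projCL (E i) (hE.closed i) (B y)) :
    MemCStar E ((B : H →ₗ[ℂ] H).restrict (hE.iSup_mem_invtSubmodule_of_map_projCL hB)) := by
  intro i
  obtain ⟨hK, hKperp⟩ := hE.mem_invtSubmodule_of_map_projCL (hB i)
  exact ⟨fun _ hx => hK hx, fun _ hx => hKperp hx, ‖B‖, fun x _ => B.le_opNorm x⟩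

theorem extendOperator_eq_adjoint (hE : IsQuantizedDomain E)
    {T S : ↥(⨆ i, E i) →ₗ[ℂ] ↥(⨆ i, E i)} (hT : ∃ C, ∀ x, ‖(T x : H)‖ ≤ C * ‖x‖)
    (hS : ∃ C, ∀ x, ‖(S x : H)‖ ≤ C * ‖x‖) (hTS : IsAdjointOn E T S) :
    (⨆ i, E i).extendOperator S = ContinuousLinearMap.adjoint ((⨆ i, E i).extendOperator T) := by
  refine ContinuousLinearMap.eq_adjoint_of_dense hE.dense_iSup_s4 hE.dense_iSup_s4 fun x hx y hy => ?_
  rw [Submodule.extendOperator_apply hE.dense_iSup_s4 hS ⟨x, hx⟩,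
    Submodule.extendOperator_apply hE.dense_iSup_s4 hT ⟨y, hy⟩, ← inner_conj_symm,
    ← hTS ⟨y, hy⟩ ⟨x, hx⟩, inner_conj_symm]

end IsQuantizedDomain

end QuantizedDomain

theorem statement_4_general {H : Type*} [NormedAddCommGroup H] [InnerProductSpace ℂ H]
    [CompleteSpace H] {ι : Type*} {E : ι → Submodule ℂ H}
    (hE : IsQuantizedDomain E) :
    ∃ Φ : {T : ↥(⨆ i, E i) →ₗ[ℂ] ↥(⨆ i, E i) //
        MemCStar E T ∧ ∃ C : ℝ, ∀ x : ↥(⨆ i, E i), ‖(T x : H)‖ ≤ C * ‖x‖} → H →L[ℂ] H,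
      (∀ T, ∀ x : ↥(⨆ i, E i), Φ T (x : H) = (T.val x : H)) ∧
      Function.Injective Φ ∧
      Set.range Φ = {B : H →L[ℂ] H | ∀ (i : ι) (y : H),
        B (projCL (E i) (hE.closed i) y) = projCL (E i) (hE.closed i) (B y)} ∧
      (∀ T, ‖Φ T‖ = sSup (Set.range fun i : ι => restrictedNorm E i T.val)) ∧
      (∀ T S U, U.val = T.val + S.val → Φ U = Φ T + Φ S) ∧
      (∀ (c : ℂ) T U, U.val = c • T.val → Φ U = c • Φ T) ∧
      (∀ T S U, U.val = T.val ∘ₗ S.val → Φ U = (Φ T).comp (Φ S)) ∧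
      (∀ T S, IsAdjointOn E T.val S.val → Φ S = ContinuousLinearMap.adjoint (Φ T)) := by
  have hD := hE.dense_iSup_s4
  refine ⟨fun T => (⨆ i, E i).extendOperator T.1,
    fun T => Submodule.extendOperator_apply hD T.2.2,
    fun T S h => Subtype.ext (Submodule.eq_of_extendOperator_eq hD T.2.2 S.2.2 h), ?_,
    fun T => hE.norm_eq_sSup_restrictedNorm (Submodule.extendOperator_apply hD T.2.2),
    fun T S U hU => ?_, fun c T U hU => ?_, fun T S U hU => ?_,
    fun T S => hE.extendOperator_eq_adjoint T.2.2 S.2.2⟩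
  · ext B
    refine ⟨?_, fun hB => ?_⟩
    · rintro ⟨T, rfl⟩
      exact hE.map_projCL_of_memCStar T.2.1 (Submodule.extendOperator_apply hD T.2.2)
    · exact ⟨⟨_, hE.memCStar_restrict_of_map_projCL hB, ‖B‖, fun x => B.le_opNorm x⟩,
        Submodule.extendOperator_eq hD fun _ => rfl⟩
  · simp only [hU]
    exact Submodule.extendOperator_add hD T.2.2 S.2.2
  · simp only [hU]
    exact Submodule.extendOperator_smul hD T.2.2 c
  · simp only [hU]
    exact Submodule.extendOperator_comp hD T.2.2 S.2.2

theorem statement_4 {H : Type*} [NormedAddCommGroup H] [InnerProductSpace ℂ H]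
    [CompleteSpace H] {ι : Type*} [Nonempty ι] {E : ι → Submodule ℂ H}
    (hE : IsQuantizedDomain E) :
    ∃ Φ : {T : ↥(⨆ i, E i) →ₗ[ℂ] ↥(⨆ i, E i) //
        MemCStar E T ∧ ∃ C : ℝ, ∀ x : ↥(⨆ i, E i), ‖(T x : H)‖ ≤ C * ‖x‖} → H →L[ℂ] H,
      (∀ T, ∀ x : ↥(⨆ i, E i), Φ T (x : H) = (T.val x : H)) ∧
      Function.Injective Φ ∧
      Set.range Φ = {B : H →L[ℂ] H | ∀ (i : ι) (y : H),
        B (projCL (E i) (hE.closed i) y) = projCL (E i) (hE.closed i) (B y)} ∧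
      (∀ T, ‖Φ T‖ = sSup (Set.range fun i : ι => restrictedNorm E i T.val)) ∧
      (∀ T S U, U.val = T.val + S.val → Φ U = Φ T + Φ S) ∧
      (∀ (c : ℂ) T U, U.val = c • T.val → Φ U = c • Φ T) ∧
      (∀ T S U, U.val = T.val ∘ₗ S.val → Φ U = (Φ T).comp (Φ S)) ∧
      (∀ T S, IsAdjointOn E T.val S.val → Φ S = ContinuousLinearMap.adjoint (Φ T)) :=
  statement_4_general hE

end
end

section
/- Let 𝒜 be a unital locally C*-algebra, {ℋ; ℰ = {ℋ_n}_n; 𝒟_ℰ} a quantized Fréchet domain in a Hilbert space ℋ, P_n the projection onto ℋ_n, S_1 = P_1 and S_n = (id_ℋ − P_{n−1})P_n for n ≥ 2, and let ψ_n : 𝒜 → B(ℋ), n ≥ 1, be local completely positive maps (with respect to the trivial quantized domain {ℋ}). Then the formula φ̃(a) = Σ_{n=1}^∞ S_n ψ_n(a) S_n (which on each ℋ_n reduces to the finite sum Σ_{k≤n} S_k ψ_k(a) S_k) defines a well-defined linear map φ̃ : 𝒜 → C*(𝒟_ℰ), and φ̃ is a local completely positive map. -/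
open scoped ComplexOrder

noncomputable section

/-- The projections `S_1 = P_1`, `S_n = (id - P_{n-1}) P_n` (`n ≥ 2`) onto
`ℋ_{n-1}^⊥ ∩ ℋ_n` (with `0`-based indexing: `Sproj 0 = P_0`,
`Sproj (n+1) = P_{n+1} - P_n`). -/
def Sproj {H : Type*} [NormedAddCommGroup H] [InnerProductSpace ℂ H] [CompleteSpace H]
    (E : ℕ → Submodule ℂ H) (hcl : ∀ n, IsClosed (E n : Set H)) : ℕ → (H →L[ℂ] H)
  | 0 => projCL (E 0) (hcl 0)
  | n + 1 => projCL (E (n + 1)) (hcl (n + 1)) - projCL (E n) (hcl n)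

/-!
On `ℋ_n` only `S_0, …, S_n` act nontrivially (`S_m` vanishes on `ℋ_{m-1}`), so the series
`Σ_m S_m ψ_m(a) S_m` is a finite sum there, and these finite sums agree on the overlaps;
this defines `φ̃(a)` on `𝒟_ℰ`. Since the `S_m` are self-adjoint with range in `ℋ_m`, each
partial sum leaves `ℋ_i` and `ℋ_i^⊥` invariant. On `ℋ_n` the matrix form splits as
`Σ_{i,j} ⟪ξ_i, φ̃(a_ij) ξ_j⟫ = Σ_{m ≤ n} Σ_{i,j} ⟪S_m ξ_i, ψ_m(a_ij) S_m ξ_j⟫`, so a single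
`λ` dominating the finitely many `λ_0, …, λ_n` attached to `ψ_0, …, ψ_n` makes `φ̃`
positive on `ℋ_n`.
-/

section Projections

variable {H : Type*} [NormedAddCommGroup H] [InnerProductSpace ℂ H] [CompleteSpace H]

theorem projCL_apply_of_mem {K : Submodule ℂ H} (hK : IsClosed (K : Set H)) {x : H}
    (hx : x ∈ K) : projCL K hK x = x := by
  have : CompleteSpace K := hK.completeSpace_coe
  exact K.starProjection_eq_self_iff.mpr hx

theorem isSelfAdjoint_projCL (K : Submodule ℂ H) (hK : IsClosed (K : Set H)) :
    IsSelfAdjoint (projCL K hK) := by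
  have : CompleteSpace K := hK.completeSpace_coe
  exact isSelfAdjoint_starProjection K

variable {E : ℕ → Submodule ℂ H} {hcl : ∀ n, IsClosed (E n : Set H)}

theorem isSelfAdjoint_Sproj : ∀ m, IsSelfAdjoint (Sproj E hcl m)
  | 0 => isSelfAdjoint_projCL (E 0) (hcl 0)
  | m + 1 =>
    (isSelfAdjoint_projCL (E (m + 1)) (hcl _)).sub (isSelfAdjoint_projCL (E m) (hcl m))

theorem inner_Sproj_left (m : ℕ) (x y : H) :
    inner ℂ (Sproj E hcl m x) y = inner ℂ x (Sproj E hcl m y) :=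
  isSelfAdjoint_Sproj m |>.isSymmetric x y

theorem Sproj_apply_mem (hmono : Monotone E) (m : ℕ) (y : H) : Sproj E hcl m y ∈ E m := by
  cases m with
  | zero => exact projCL_mem _ (hcl 0) y
  | succ k => exact sub_mem (projCL_mem _ (hcl _) y) (hmono k.le_succ (projCL_mem _ (hcl k) y))

theorem Sproj_apply_eq_zero_of_lt (hmono : Monotone E) {n m : ℕ} (h : n < m) {x : H}
    (hx : x ∈ E n) : Sproj E hcl m x = 0 := by
  obtain ⟨k, rfl⟩ := Nat.exists_eq_add_of_lt h
  rw [Sproj, sub_apply, projCL_apply_of_mem _ (hmono (by omega) hx),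
    projCL_apply_of_mem _ (hmono (by omega) hx), sub_self]

theorem Sproj_apply_mem_orthogonal (hmono : Monotone E) {i m : ℕ} (h : i < m) (y : H) :
    Sproj E hcl m y ∈ (E i)ᗮ :=
  (Submodule.mem_orthogonal _ _).2 fun z hz => by
    rw [← inner_Sproj_left, Sproj_apply_eq_zero_of_lt hmono h hz, inner_zero_left]

theorem Sproj_apply_eq_zero_of_mem_orthogonal (hmono : Monotone E) {i m : ℕ} (h : m ≤ i)
    {x : H} (hx : x ∈ (E i)ᗮ) : Sproj E hcl m x = 0 := by
  rw [← inner_self_eq_zero (𝕜 := ℂ), inner_Sproj_left]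
  exact Submodule.inner_left_of_mem_orthogonal (hmono h (Sproj_apply_mem hmono m _)) hx

end Projections

section BlockDiagonal

variable {H : Type*} [NormedAddCommGroup H] [InnerProductSpace ℂ H] [CompleteSpace H]
  {A : Type*} [AddCommGroup A] [Module ℂ A]

/-- `a ↦ Σ_{m ≤ n} S_m ψ_m(a) S_m`, written with left and right multiplications so that it is
linear in `a` by construction. -/
def blockDiagSum (E : ℕ → Submodule ℂ H) (hcl : ∀ n, IsClosed (E n : Set H))
    (ψ : ℕ → A →ₗ[ℂ] (H →L[ℂ] H)) (n : ℕ) : A →ₗ[ℂ] (H →L[ℂ] H) :=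
  ∑ m ∈ Finset.range (n + 1),
    (LinearMap.mulLeft ℂ (Sproj E hcl m) ∘ₗ LinearMap.mulRight ℂ (Sproj E hcl m)) ∘ₗ
      ψ m

variable {E : ℕ → Submodule ℂ H} {hcl : ∀ n, IsClosed (E n : Set H)}
  {ψ : ℕ → A →ₗ[ℂ] (H →L[ℂ] H)}

theorem blockDiagSum_apply_apply (n : ℕ) (a : A) (x : H) :
    blockDiagSum E hcl ψ n a x =
      ∑ m ∈ Finset.range (n + 1), Sproj E hcl m (ψ m a (Sproj E hcl m x)) := by
  simp [blockDiagSum]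

theorem inner_blockDiagSum_apply_apply (n : ℕ) (a : A) (x y : H) :
    inner ℂ x (blockDiagSum E hcl ψ n a y) =
      ∑ m ∈ Finset.range (n + 1), inner ℂ (Sproj E hcl m x) (ψ m a (Sproj E hcl m y)) := by
  simp only [blockDiagSum_apply_apply, inner_sum, inner_Sproj_left]

variable (hmono : Monotone E)
include hmono

theorem blockDiagSum_apply_apply_mem (n : ℕ) (a : A) (x : H) :
    blockDiagSum E hcl ψ n a x ∈ E n := by
  rw [blockDiagSum_apply_apply]
  exact Submodule.sum_mem _ fun m hm =>
    hmono (Nat.lt_succ_iff.mp (Finset.mem_range.mp hm)) (Sproj_apply_mem hmono m _)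

theorem blockDiagSum_apply_apply_mem_orthogonal (n : ℕ) (a : A) {i : ℕ} {x : H}
    (hx : x ∈ (E i)ᗮ) : blockDiagSum E hcl ψ n a x ∈ (E i)ᗮ := by
  rw [blockDiagSum_apply_apply]
  refine Submodule.sum_mem _ fun m _ => ?_
  rcases le_or_gt m i with h | h
  · rw [Sproj_apply_eq_zero_of_mem_orthogonal hmono h hx, map_zero, map_zero]
    exact zero_mem _
  · exact Sproj_apply_mem_orthogonal hmono h _

theorem blockDiagSum_apply_apply_of_le (a : A) {n n' : ℕ} (hn : n ≤ n') {x : H}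
    (hx : x ∈ E n) : blockDiagSum E hcl ψ n' a x = blockDiagSum E hcl ψ n a x := by
  simp only [blockDiagSum_apply_apply]
  refine (Finset.sum_subset (by simpa using hn) fun m _ hm => ?_).symm
  rw [Sproj_apply_eq_zero_of_lt hmono (by simpa using hm) hx, map_zero, map_zero]

theorem blockDiagSum_apply_apply_eq (a : A) {n n' : ℕ} {x : H} (hx : x ∈ E n)
    (hx' : x ∈ E n') : blockDiagSum E hcl ψ n a x = blockDiagSum E hcl ψ n' a x := by
  rw [← blockDiagSum_apply_apply_of_le hmono a (le_max_left n n') hx,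
    ← blockDiagSum_apply_apply_of_le hmono a (le_max_right n n') hx']

end BlockDiagonal

section BlockDiagonalMap

variable {H : Type*} [NormedAddCommGroup H] [InnerProductSpace ℂ H] {E : ℕ → Submodule ℂ H}

def chainIndex (hmono : Monotone E) (x : ↥(⨆ n, E n)) : ℕ :=
  ((Submodule.mem_iSup_of_directed E hmono.directed_le).mp x.2).choose

theorem mem_chainIndex (hmono : Monotone E) (x : ↥(⨆ n, E n)) :
    (x : H) ∈ E (chainIndex hmono x) :=
  ((Submodule.mem_iSup_of_directed E hmono.directed_le).mp x.2).choose_spec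

theorem exists_mem_and_mem (hmono : Monotone E) (x y : ↥(⨆ n, E n)) :
    ∃ n, (x : H) ∈ E n ∧ (y : H) ∈ E n :=
  ⟨_, hmono (le_max_left _ _) (mem_chainIndex hmono x),
    hmono (le_max_right _ _) (mem_chainIndex hmono y)⟩

variable [CompleteSpace H] {A : Type*} [AddCommGroup A] [Module ℂ A]

/-- The map `φ̃` of the statement. -/
def blockDiagMap (hcl : ∀ n, IsClosed (E n : Set H)) (hmono : Monotone E)
    (ψ : ℕ → A →ₗ[ℂ] (H →L[ℂ] H)) :
    A →ₗ[ℂ] (↥(⨆ n, E n) →ₗ[ℂ] ↥(⨆ n, E n)) :=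
  LinearMap.mk₂ ℂ
    (fun a x => inclE E _ _
      (blockDiagSum_apply_apply_mem (hcl := hcl) (ψ := ψ) hmono (chainIndex hmono x) a x))
    (fun a b x => Subtype.ext <| by simp [inclE])
    (fun c a x => Subtype.ext <| by simp [inclE])
    (fun a x y => Subtype.ext <| by
      obtain ⟨n, hx, hy⟩ := exists_mem_and_mem hmono x y
      simp only [inclE, Submodule.coe_add]
      rw [blockDiagSum_apply_apply_eq hmono a (x := (x : H) + y) (mem_chainIndex hmono (x + y))
          (add_mem hx hy), map_add,
        blockDiagSum_apply_apply_eq hmono a (mem_chainIndex hmono x) hx,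
        blockDiagSum_apply_apply_eq hmono a (mem_chainIndex hmono y) hy])
    (fun c a x => Subtype.ext <| by
      simp only [inclE, Submodule.coe_smul]
      rw [blockDiagSum_apply_apply_eq hmono a (x := c • (x : H)) (mem_chainIndex hmono (c • x))
        (Submodule.smul_mem _ c (mem_chainIndex hmono x)), map_smul])

variable {hcl : ∀ n, IsClosed (E n : Set H)} {hmono : Monotone E}
  {ψ : ℕ → A →ₗ[ℂ] (H →L[ℂ] H)}

theorem blockDiagMap_apply_apply_of_mem (a : A) (x : ↥(⨆ n, E n)) {n : ℕ}
    (hx : (x : H) ∈ E n) :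
    (blockDiagMap hcl hmono ψ a x : H) = blockDiagSum E hcl ψ n a x :=
  blockDiagSum_apply_apply_eq hmono a (mem_chainIndex hmono x) hx

theorem blockDiagMap_apply_inclE (a : A) {n : ℕ} {x : H} (hx : x ∈ E n) :
    (blockDiagMap hcl hmono ψ a (inclE E n x hx) : H) = blockDiagSum E hcl ψ n a x :=
  blockDiagMap_apply_apply_of_mem a _ hx

theorem memCStar_blockDiagMap (a : A) : MemCStar E (blockDiagMap hcl hmono ψ a) := fun i =>
  ⟨fun x hx => by
    rw [blockDiagMap_apply_apply_of_mem a x hx]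
    exact blockDiagSum_apply_apply_mem hmono i a x,
  fun x hx => by
    rw [blockDiagMap_apply_apply_of_mem a x (mem_chainIndex hmono x)]
    exact blockDiagSum_apply_apply_mem_orthogonal hmono _ a hx,
  ⟨‖blockDiagSum E hcl ψ i a‖, fun x hx => by
    rw [blockDiagMap_apply_apply_of_mem a x hx]
    exact (blockDiagSum E hcl ψ i a).le_opNorm x⟩⟩

end BlockDiagonalMap

section LocalCP

variable {A : Type*} [Ring A] [StarRing A]

theorem LocalPositive.mono {q r : A → ℝ} (h : ∀ c, r c = 0 → q c = 0) {a : A}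
    (ha : LocalPositive r a) : LocalPositive q a :=
  let ⟨b, c, hc, hab⟩ := ha
  ⟨b, c, h c hc, hab⟩

variable [Algebra ℂ A] {Λ : Type*} {p : Λ → A → ℝ}
  {pk : ∀ k : ℕ, Λ → Matrix (Fin k) (Fin k) A → ℝ}

theorem IsMatrixCStarSeminormFamily.nonneg (hpk : IsMatrixCStarSeminormFamily p pk) (l : Λ)
    (a : A) : 0 ≤ p l a := by
  simpa [hpk.compat] using (hpk.cstarSeminorm 1 l).nonneg (Matrix.of fun _ _ => a)

theorem IsMatrixCStarSeminormFamily.eq_zero_of_le (hpk : IsMatrixCStarSeminormFamily p pk)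
    {l l' : Λ} (hle : p l ≤ p l') {k : ℕ} {M : Matrix (Fin k) (Fin k) A}
    (hM : pk k l' M = 0) : pk k l M = 0 := by
  rw [hpk.ker] at hM ⊢
  exact fun i j => le_antisymm ((hle _).trans (hM i j).le) (hpk.nonneg l _)

theorem IsLocallyCStarAlgebra.directed_le [StarModule ℂ A] [Nonempty Λ] [UniformSpace A]
    [IsUniformAddGroup A] (hA : IsLocallyCStarAlgebra p) : Directed (· ≤ ·) p :=
  hA.directed

variable {H : Type*} [NormedAddCommGroup H] [InnerProductSpace ℂ H] [CompleteSpace H]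
  {E : ℕ → Submodule ℂ H} {hcl : ∀ n, IsClosed (E n : Set H)} {hmono : Monotone E}
  {ψ : ℕ → A →ₗ[ℂ] (H →L[ℂ] H)}

theorem isLocalCP_blockDiagMap [Nonempty Λ] (hdir : Directed (· ≤ ·) p)
    (hpk : IsMatrixCStarSeminormFamily p pk) (hψ : ∀ m, IsLocalCPB pk (ψ m)) :
    IsLocalCP pk E (blockDiagMap hcl hmono ψ) := by
  classical
  intro n
  choose L hL using hψ
  obtain ⟨l, hl⟩ := hdir.finset_le ((Finset.range (n + 1)).image L)
  have hker : ∀ m ∈ Finset.range (n + 1), ∀ k (M : Matrix (Fin k) (Fin k) A),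
      pk k l M = 0 → pk k (L m) M = 0 := fun m hm _ _ =>
    hpk.eq_zero_of_le (hl _ (Finset.mem_image_of_mem L hm))
  refine ⟨l, fun k M => ⟨fun hM ξ hξ => ?_, fun hM i j x hx => ?_⟩⟩
  · simp only [blockDiagMap_apply_inclE, inner_blockDiagSum_apply_apply]
    calc (0 : ℂ)
        ≤ ∑ m ∈ Finset.range (n + 1), ∑ i, ∑ j,
            inner ℂ (Sproj E hcl m (ξ i)) (ψ m (M i j) (Sproj E hcl m (ξ j))) :=
          Finset.sum_nonneg fun m hm => (hL m k M).1 (hM.mono (hker m hm k)) _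
      _ = _ := by
        rw [Finset.sum_comm]
        exact Finset.sum_congr rfl fun i _ => Finset.sum_comm
  · rw [blockDiagMap_apply_inclE _ hx, blockDiagSum_apply_apply]
    refine Finset.sum_eq_zero fun m hm => ?_
    rw [(hL m k M).2 (hker m hm k M hM) i j, zero_apply, map_zero]

end LocalCP

theorem statement_9 {A : Type*} {Λ : Type*} [Ring A] [StarRing A] [Algebra ℂ A]
    [StarModule ℂ A] [Nonempty Λ] [UniformSpace A] [IsUniformAddGroup A] {p : Λ → A → ℝ}
    (hA : IsLocallyCStarAlgebra p)
    {pk : ∀ k : ℕ, Λ → Matrix (Fin k) (Fin k) A → ℝ}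
    (hpk : IsMatrixCStarSeminormFamily p pk)
    {H : Type*} [NormedAddCommGroup H] [InnerProductSpace ℂ H] [CompleteSpace H]
    {E : ℕ → Submodule ℂ H} (hE : IsQuantizedFrechetDomain E)
    (ψ : ℕ → (A →ₗ[ℂ] (H →L[ℂ] H))) (hψ : ∀ m, IsLocalCPB pk (ψ m)) :
    ∃ φt : A →ₗ[ℂ] (↥(⨆ n, E n) →ₗ[ℂ] ↥(⨆ n, E n)),
      (∀ a, MemCStar E (φt a)) ∧
      (∀ (a : A) (n : ℕ) (x : H) (hx : x ∈ E n),
        (φt a (inclE E n x hx) : H) =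
          ∑ m ∈ Finset.range (n + 1), Sproj E hE.closed m (ψ m a (Sproj E hE.closed m x))) ∧
      IsLocalCP pk E φt :=
  ⟨blockDiagMap hE.closed hE.mono ψ, memCStar_blockDiagMap,
    fun a _ x hx =>
      (blockDiagMap_apply_inclE a hx).trans (blockDiagSum_apply_apply _ a x),
    isLocalCP_blockDiagMap hA.directed_le hpk hψ⟩
end
end

section
/- Let 𝒜 be a unital locally C*-algebra, {ℋ; ℰ = {ℋ_n}_n; 𝒟_ℰ} a quantized Fréchet domain in a Hilbert space ℋ, and Φ : M₂(𝒜) → C*(𝒟_{ℰ⊕ℰ}) a unital local completely positive map satisfying Φ([[1_𝒜, 0],[0, 0]]) = [[1_{C*(𝒟_ℰ)}, 0],[0, 0]]. Then there exist unital local completely positive maps φ₁, φ₂ : 𝒜 → C*(𝒟_ℰ) such that Φ([[a, 0],[0, 0]]) = [[φ₁(a), 0],[0, 0]] and Φ([[0, 0],[0, d]]) = [[0, 0],[0, φ₂(d)]] for all a, d ∈ 𝒜. -/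
open scoped ComplexOrder

noncomputable section

/-!
Write `e = e₁₁`. Since `Φ(e)` is the coordinate projection onto the first summand, `Φ(e) ζ = 0`
whenever the first coordinate of `ζ` vanishes. For such `ζ`, local positivity of `Φ⁽²⁾` at
`[[e, x], [x*, x*x]] = [[e, x], [0, 0]]* [[e, x], [0, 0]]`, tested on `(t ζ, η)`, gives
`0 ≤ t̄ ⟪ζ, Φ(x) η⟫ + t ⟪η, Φ(x*) ζ⟫ + ⟪η, Φ(x*x) η⟫` for all `t ∈ ℂ`, so both cross terms vanish
for every `x ∈ e M₂(𝒜)`. With `x = a e₁₁` and density of `𝒟_ℰ`, `Φ(a e₁₁)` maps into the first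
summand and kills the second, hence equals `[[φ₁(a), 0], [0, 0]]` for its compression `φ₁(a)` to
the first corner; `φ₁` inherits unitality, membership in `C*(𝒟_ℰ)` and local complete positivity
(through `[a_ij] ↦ [a_ij e₁₁]`) from `Φ`. As `Φ(e₂₂) = 1 - Φ(e₁₁)`, the second corner is the same.
-/

open scoped InnerProductSpace

theorem eq_zero_of_forall_nonneg_ofReal_mul_add {u c : ℂ} (h : ∀ r : ℝ, 0 ≤ r * u + c) :
    u = 0 := by
  have hre (r : ℝ) : 0 ≤ r * u.re + c.re := by simpa using (Complex.le_def.mp (h r)).1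
  have him (r : ℝ) : r * u.im + c.im = 0 := by simpa using (Complex.le_def.mp (h r)).2.symm
  refine Complex.ext ?_ (by simp only [Complex.zero_im]; linarith [him 0, him 1])
  by_contra hu
  have := hre (-(c.re + 1) / u.re)
  rw [div_mul_cancel₀ _ hu] at this
  linarith

theorem eq_zero_of_forall_nonneg_conj_mul_add_mul_add {z w c : ℂ}
    (h : ∀ t : ℂ, 0 ≤ starRingEnd ℂ t * z + t * w + c) : z = 0 ∧ w = 0 := by
  have hsum : z + w = 0 := eq_zero_of_forall_nonneg_ofReal_mul_add fun r => by
    simpa [mul_add] using h r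
  have hdiff : Complex.I * (w - z) = 0 := eq_zero_of_forall_nonneg_ofReal_mul_add fun r => by
    convert h (r * Complex.I) using 2
    simp only [map_mul, Complex.conj_ofReal, Complex.conj_I]
    ring
  have hwz : w = z := by
    simpa [sub_eq_zero, Complex.I_ne_zero] using hdiff
  subst hwz
  constructor <;> linear_combination hsum / 2

section QuantizedDomain

variable {H : Type*} [NormedAddCommGroup H] [InnerProductSpace ℂ H] {ι : Type*}
  {E : ι → Submodule ℂ H}

@[simp]
theorem coe_inclE (n : ι) (x : H) (hx : x ∈ E n) : (inclE E n x hx : H) = x := rfl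

theorem IsQuantizedFrechetDomain.isQuantizedDomain {E : ℕ → Submodule ℂ H}
    (hE : IsQuantizedFrechetDomain E) : IsQuantizedDomain E :=
  ⟨hE.closed, hE.mono.directed_le, hE.dense⟩

theorem IsQuantizedDomain.eq_zero_of_forall_inner_eq_zero (hE : IsQuantizedDomain E) (m : ι)
    {u : H} (h : ∀ n, E m ≤ E n → ∀ y ∈ E n, ⟪y, u⟫_ℂ = 0) : u = 0 := by
  refine hE.dense.eq_zero_of_inner_right (𝕜 := ℂ) ?_
  rintro y ⟨_, ⟨n', rfl⟩, hy⟩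
  obtain ⟨n, hmn, hn'n⟩ := hE.directed m n'
  exact h n hmn y (hn'n hy)

end QuantizedDomain

theorem PiLp.inner_single_left {𝕜 ι : Type*} [RCLike 𝕜] [Fintype ι] [DecidableEq ι]
    {β : ι → Type*} [∀ i, NormedAddCommGroup (β i)] [∀ i, InnerProductSpace 𝕜 (β i)]
    (i : ι) (y : β i) (u : PiLp 2 β) : ⟪PiLp.single 2 i y, u⟫_𝕜 = ⟪y, u i⟫_𝕜 := by
  rw [PiLp.inner_apply, Finset.sum_eq_single i (fun j _ hj => by simp [hj])
    (by simp), PiLp.single_eq_same]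

theorem PiLp.inner_single_right {𝕜 ι : Type*} [RCLike 𝕜] [Fintype ι] [DecidableEq ι]
    {β : ι → Type*} [∀ i, NormedAddCommGroup (β i)] [∀ i, InnerProductSpace 𝕜 (β i)]
    (i : ι) (y : β i) (u : PiLp 2 β) : ⟪u, PiLp.single 2 i y⟫_𝕜 = ⟪u i, y⟫_𝕜 := by
  rw [← inner_conj_symm, PiLp.inner_single_left, inner_conj_symm]

section DoubledDomain

variable {H : Type*} [NormedAddCommGroup H] [InnerProductSpace ℂ H] {ι : Type*}
  {E : ι → Submodule ℂ H}

theorem single_mem_E2 {n : ι} {y : H} (hy : y ∈ E n) (t : Fin 2) :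
    PiLp.single 2 t y ∈ E2 E n := by
  intro s
  by_cases hs : s = t
  · subst hs; simpa using hy
  · simp [hs]

theorem E2_mono {m n : ι} (h : E m ≤ E n) : E2 E m ≤ E2 E n :=
  fun _ hv s => h (hv s)

variable [Nonempty ι]

theorem exists_mem_E2 (hE : Directed (· ≤ ·) E) (v : ↥(⨆ n, E2 E n)) :
    ∃ m, (v : PiLp 2 fun _ : Fin 2 => H) ∈ E2 E m :=
  (Submodule.mem_iSup_of_directed _ (E2_directed hE)).mp v.2

def embD (E : ι → Submodule ℂ H) (hE : Directed (· ≤ ·) E) (t : Fin 2) :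
    ↥(⨆ n, E n) →ₗ[ℂ] ↥(⨆ n, E2 E n) where
  toFun w := ⟨PiLp.single 2 t (w : H), by
    obtain ⟨m, hm⟩ := (Submodule.mem_iSup_of_directed E hE).mp w.2
    exact le_iSup (E2 E) m (single_mem_E2 hm t)⟩
  map_add' v w := Subtype.ext (PiLp.single_add 2 t)
  map_smul' c w := Subtype.ext <| by ext s; by_cases hs : s = t <;> simp [hs]

variable (hE : Directed (· ≤ ·) E)

@[simp]
theorem coe_embD (t : Fin 2) (w : ↥(⨆ n, E n)) :
    (embD E hE t w : PiLp 2 fun _ : Fin 2 => H) = PiLp.single 2 t (w : H) := rfl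

@[simp]
theorem coe_cmpD (t : Fin 2) (v : ↥(⨆ n, E2 E n)) :
    (cmpD E hE t v : H) = (v : PiLp 2 fun _ : Fin 2 => H) t := rfl

@[simp]
theorem cmpD_embD (t : Fin 2) (w : ↥(⨆ n, E n)) : cmpD E hE t (embD E hE t w) = w :=
  Subtype.ext (PiLp.single_eq_same 2 t _)

-- `T ↦ cmpD t ∘ₗ T ∘ₗ embD t`, bundled as a linear map in `T`.
def compressD (t : Fin 2) :
    (↥(⨆ n, E2 E n) →ₗ[ℂ] ↥(⨆ n, E2 E n)) →ₗ[ℂ] (↥(⨆ n, E n) →ₗ[ℂ] ↥(⨆ n, E n)) :=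
  LinearMap.llcomp ℂ _ _ _ (cmpD E hE t) ∘ₗ LinearMap.lcomp ℂ _ (embD E hE t)

theorem embD_comp_cmpD_add :
    embD E hE 0 ∘ₗ cmpD E hE 0 + embD E hE 1 ∘ₗ cmpD E hE 1 = LinearMap.id := by
  ext v s; fin_cases s <;> simp

theorem MemCStar.compress {T : ↥(⨆ n, E2 E n) →ₗ[ℂ] ↥(⨆ n, E2 E n)}
    (hT : MemCStar (E2 E) T) (t : Fin 2) : MemCStar E (compressD hE t T) := by
  intro i
  obtain ⟨hinv, hinvPerp, C, hC⟩ := hT i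
  refine ⟨fun x hx => hinv (embD E hE t x) (single_mem_E2 hx t) t, fun x hx => ?_, C,
    fun x hx => ?_⟩
  · have hemb : PiLp.single 2 t (x : H) ∈ (E2 E i)ᗮ := fun u hu => by
      rw [PiLp.inner_single_right]; exact hx _ (hu t)
    intro y hy
    exact (PiLp.inner_single_left (𝕜 := ℂ) t y _).symm.trans
      (hinvPerp (embD E hE t x) hemb _ (single_mem_E2 hy t))
  · calc ‖(compressD hE t T x : H)‖ ≤ ‖(T (embD E hE t x) : PiLp 2 fun _ : Fin 2 => H)‖ :=
          PiLp.norm_apply_le _ t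
      _ ≤ C * ‖x‖ := by simpa using hC (embD E hE t x) (single_mem_E2 hx t)

end DoubledDomain

section Corner

def Matrix.cornerHom {m A : Type*} [Fintype m] [DecidableEq m] [Ring A] [StarRing A]
    [Algebra ℂ A] (i : m) : A →⋆ₙₐ[ℂ] Matrix m m A where
  toFun := Matrix.single i i
  map_smul' c a := (Matrix.smul_single c i i a).symm
  map_zero' := Matrix.single_zero i i
  map_add' := Matrix.single_add i i
  map_mul' a b := (Matrix.single_mul_single_same i i i (c := a) b).symm
  map_star' a := (Matrix.conjTranspose_single i i a).symm

variable {A : Type*} [Ring A] [StarRing A] [Algebra ℂ A] {Λ : Type*} {p : Λ → A → ℝ}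
  {pk : ∀ k : ℕ, Λ → Matrix (Fin k) (Fin k) A → ℝ}

theorem Matrix.cornerHom_zero_eq (a : A) :
    Matrix.cornerHom 0 a = !![a, 0; 0, 0] := by
  ext i j; fin_cases i <;> fin_cases j <;> rfl

theorem Matrix.cornerHom_one_eq (a : A) :
    Matrix.cornerHom 1 a = !![0, 0; 0, a] := by
  ext i j; fin_cases i <;> fin_cases j <;> rfl

theorem Matrix.cornerHom_one_one :
    Matrix.cornerHom (1 : Fin 2) (1 : A) = 1 - Matrix.cornerHom 0 1 := by
  rw [eq_sub_iff_add_eq', Matrix.cornerHom_zero_eq, Matrix.cornerHom_one_eq, Matrix.one_fin_two]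
  simp

theorem IsMatrixCStarSeminormFamily.apply_zero (hpk : IsMatrixCStarSeminormFamily p pk)
    (l : Λ) : p l 0 = 0 := by
  rw [← Matrix.zero_apply (0 : Fin 1) (0 : Fin 1), ← hpk.compat]
  exact map_zero (hpk.cstarSeminorm 1 l).toSeminorm

theorem IsMatrixCStarSeminormFamily.pk2_zero (hpk : IsMatrixCStarSeminormFamily p pk) (k : ℕ)
    (l : Λ) : pk2 pk k l 0 = 0 :=
  (hpk.ker _ l _).mpr fun _ _ => hpk.apply_zero l

theorem IsMatrixCStarSeminormFamily.pk2_map_cornerHom_eq_zero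
    (hpk : IsMatrixCStarSeminormFamily p pk) (t : Fin 2) {k : ℕ} {l : Λ}
    {M : Matrix (Fin k) (Fin k) A} (hM : pk k l M = 0) :
    pk2 pk k l (M.map (Matrix.cornerHom t)) = 0 := by
  rw [pk2, hpk.ker]
  intro I J
  simp only [matFlatten, Matrix.of_apply, Matrix.map_apply, Matrix.cornerHom,
    NonUnitalStarAlgHom.coe_mk, Matrix.single_apply]
  split_ifs
  · exact (hpk.ker k l M).mp hM _ _
  · exact hpk.apply_zero l

theorem LocalPositive.map_cornerHom (hpk : IsMatrixCStarSeminormFamily p pk) (t : Fin 2)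
    {k : ℕ} {l : Λ} {M : Matrix (Fin k) (Fin k) A} (hM : LocalPositive (pk k l) M) :
    LocalPositive (pk2 pk k l) (M.map (Matrix.cornerHom t)) := by
  obtain ⟨b, c, hc, rfl⟩ := hM
  refine ⟨b.map (Matrix.cornerHom t), c.map (Matrix.cornerHom t),
    hpk.pk2_map_cornerHom_eq_zero t hc, ?_⟩
  rw [Matrix.map_add _ (map_add _), Matrix.map_mul, Matrix.star_eq_conjTranspose,
    Matrix.conjTranspose_map _ fun a => map_star _ a, Matrix.star_eq_conjTranspose]

end Corner

section Positivity

variable {B : Type*} [Ring B] [StarRing B] [Algebra ℂ B] {Λ : Type*}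
  {pk : ∀ k : ℕ, Λ → Matrix (Fin k) (Fin k) B → ℝ}
  {H : Type*} [NormedAddCommGroup H] [InnerProductSpace ℂ H] {ι : Type*}
  {E : ι → Submodule ℂ H} {φ : B →ₗ[ℂ] (↥(⨆ n, E n) →ₗ[ℂ] ↥(⨆ n, E n))}

theorem IsLocalCP.inner_eq_zero_of_apply_eq_zero (hpk : ∀ l, pk 2 l 0 = 0)
    (hφ : IsLocalCP pk E φ) {e x : B} (he : IsStarProjection e) (hex : e * x = x) {n : ι}
    {ζ η : H} (hζ : ζ ∈ E n) (hη : η ∈ E n) (hζe : φ e (inclE E n ζ hζ) = 0) :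
    ⟪ζ, (φ x (inclE E n η hη) : H)⟫_ℂ = 0 ∧ ⟪η, (φ (star x) (inclE E n ζ hζ) : H)⟫_ℂ = 0 := by
  obtain ⟨l, hl⟩ := hφ n
  have hxe : star x * e = star x := by
    rw [← he.isSelfAdjoint.star_eq, ← star_mul, hex]
  -- `[[e, x], [x*, x*x]] = N* N` for `N = [[e, x], [0, 0]]`; test its positivity at `(t ζ, η)`.
  have hpos : LocalPositive (pk 2 l) !![e, x; star x, star x * x] := by
    refine ⟨!![e, x; 0, 0], 0, hpk l, ?_⟩
    ext i j
    fin_cases i <;> fin_cases j <;>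
      simp [Matrix.mul_apply, he.isSelfAdjoint.star_eq, he.isIdempotentElem.eq, hex, hxe]
  refine eq_zero_of_forall_nonneg_conj_mul_add_mul_add
    (c := ⟪η, (φ (star x * x) (inclE E n η hη) : H)⟫_ℂ) fun t => ?_
  have hmem : ∀ i, ![t • ζ, η] i ∈ E n := by
    intro i; fin_cases i
    exacts [(E n).smul_mem t hζ, hη]
  have h := (hl 2 _).1 hpos ![t • ζ, η] hmem
  have hincl : inclE E n (t • ζ) (hmem 0) = t • inclE E n ζ hζ := rfl
  simp only [Fin.sum_univ_two] at h
  simp only [hincl, Matrix.of_apply, Matrix.cons_val_zero, Matrix.cons_val_one, map_smul, hζe,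
    smul_zero, ZeroMemClass.coe_zero, inner_zero_right, zero_add, Submodule.coe_smul,
    inner_smul_left, inner_smul_right] at h
  convert h using 1
  ring

end Positivity

section CornerCompression

variable {A : Type*} [Ring A] [StarRing A] [Algebra ℂ A] {Λ : Type*} {p : Λ → A → ℝ}
  {pk : ∀ k : ℕ, Λ → Matrix (Fin k) (Fin k) A → ℝ}
  {H : Type*} [NormedAddCommGroup H] [InnerProductSpace ℂ H] {ι : Type*} [Nonempty ι]
  {E : ι → Submodule ℂ H}
  {Φ : Matrix (Fin 2) (Fin 2) A →ₗ[ℂ] (↥(⨆ n, E2 E n) →ₗ[ℂ] ↥(⨆ n, E2 E n))}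

def cornerCompression (hE : Directed (· ≤ ·) E)
    (Φ : Matrix (Fin 2) (Fin 2) A →ₗ[ℂ] (↥(⨆ n, E2 E n) →ₗ[ℂ] ↥(⨆ n, E2 E n))) (t : Fin 2) :
    A →ₗ[ℂ] (↥(⨆ n, E n) →ₗ[ℂ] ↥(⨆ n, E n)) :=
  compressD hE t ∘ₗ Φ ∘ₗ LinearMapClass.linearMap (Matrix.cornerHom t)

theorem cornerCompression_apply (hE : Directed (· ≤ ·) E) (t : Fin 2) (a : A)
    (w : ↥(⨆ n, E n)) :
    cornerCompression hE Φ t a w = cmpD E hE t (Φ (Matrix.cornerHom t a) (embD E hE t w)) :=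
  rfl

theorem isLocalCP_cornerCompression (hcp : IsLocalCP (pk2 pk) (E2 E) Φ)
    (hpk : IsMatrixCStarSeminormFamily p pk) (hE : Directed (· ≤ ·) E) (t : Fin 2) :
    IsLocalCP pk E (cornerCompression hE Φ t) := by
  intro n
  obtain ⟨l, hl⟩ := hcp n
  refine ⟨l, fun k M => ⟨fun hM ξ hξ => ?_, fun hM i j x hx => ?_⟩⟩
  · have h := (hl k _).1 (hM.map_cornerHom hpk t) (fun i => PiLp.single 2 t (ξ i))
      fun i => single_mem_E2 (hξ i) t
    simp only [Matrix.map_apply, PiLp.inner_single_left] at h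
    exact h
  · have h := (hl k _).2 (hpk.pk2_map_cornerHom_eq_zero t hM) i j _ (single_mem_E2 hx t)
    exact congr_arg (· t) h

theorem cornerCompression_one (hE : Directed (· ≤ ·) E) {t : Fin 2}
    (hproj : Φ (Matrix.cornerHom t 1) = embD E hE t ∘ₗ cmpD E hE t) :
    cornerCompression hE Φ t 1 = LinearMap.id :=
  LinearMap.ext fun w => by simp [cornerCompression_apply, hproj]

theorem IsQuantizedDomain.apply_eq_zero_of_inner_single (hE : IsQuantizedDomain E)
    (T : ↥(⨆ n, E2 E n) →ₗ[ℂ] ↥(⨆ n, E2 E n)) {v : ↥(⨆ n, E2 E n)} {s : Fin 2}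
    (h : ∀ n, (v : PiLp 2 fun _ : Fin 2 => H) ∈ E2 E n → ∀ y ∈ E n,
      ⟪PiLp.single 2 s y, (T v : PiLp 2 fun _ : Fin 2 => H)⟫_ℂ = 0) :
    (T v : PiLp 2 fun _ : Fin 2 => H) s = 0 := by
  obtain ⟨m, hm⟩ := exists_mem_E2 hE.directed v
  refine hE.eq_zero_of_forall_inner_eq_zero m fun n hmn y hy => ?_
  have := h n (E2_mono hmn hm) y hy
  rwa [PiLp.inner_single_left] at this

theorem IsLocalCP.inner_apply_cornerHom_eq_zero (hcp : IsLocalCP (pk2 pk) (E2 E) Φ)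
    (hpk : IsMatrixCStarSeminormFamily p pk) (hE : Directed (· ≤ ·) E) {t : Fin 2}
    (hproj : Φ (Matrix.cornerHom t 1) = embD E hE t ∘ₗ cmpD E hE t) (a : A) {n : ι}
    {ζ η : PiLp 2 fun _ : Fin 2 => H} (hζ : ζ ∈ E2 E n) (hη : η ∈ E2 E n) (hζt : ζ t = 0) :
    ⟪ζ, (Φ (Matrix.cornerHom t a) (inclE (E2 E) n η hη) : PiLp 2 fun _ : Fin 2 => H)⟫_ℂ = 0 ∧
      ⟪η, (Φ (Matrix.cornerHom t a) (inclE (E2 E) n ζ hζ) :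
        PiLp 2 fun _ : Fin 2 => H)⟫_ℂ = 0 := by
  have he : IsStarProjection (Matrix.cornerHom t (1 : A)) :=
    (IsStarProjection.one A).map (Matrix.cornerHom t)
  have hcorner (b : A) : Matrix.cornerHom t 1 * Matrix.cornerHom t b = Matrix.cornerHom t b := by
    rw [← map_mul, one_mul]
  have hζe : Φ (Matrix.cornerHom t 1) (inclE (E2 E) n ζ hζ) = 0 :=
    Subtype.ext <| by simpa [hproj] using hζt
  have key (b : A) := hcp.inner_eq_zero_of_apply_eq_zero (hpk.pk2_zero 2) he (hcorner b) hζ hη hζe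
  refine ⟨(key a).1, ?_⟩
  simpa only [← map_star, star_star] using (key (star a)).2

theorem IsLocalCP.apply_cornerHom (hcp : IsLocalCP (pk2 pk) (E2 E) Φ)
    (hpk : IsMatrixCStarSeminormFamily p pk) (hE : IsQuantizedDomain E) {t : Fin 2}
    (hproj : Φ (Matrix.cornerHom t 1) = embD E hE.directed t ∘ₗ cmpD E hE.directed t)
    (a : A) :
    Φ (Matrix.cornerHom t a) =
      embD E hE.directed t ∘ₗ cornerCompression hE.directed Φ t a ∘ₗ cmpD E hE.directed t := by
  have hrange (v : ↥(⨆ n, E2 E n)) (s : Fin 2) (hs : s ≠ t) :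
      (Φ (Matrix.cornerHom t a) v : PiLp 2 fun _ : Fin 2 => H) s = 0 :=
    hE.apply_eq_zero_of_inner_single _ fun _ hv _ hy =>
      (hcp.inner_apply_cornerHom_eq_zero hpk hE.directed hproj a (single_mem_E2 hy s) hv
        (PiLp.single_eq_of_ne' 2 hs _)).1
  have hker (v : ↥(⨆ n, E2 E n)) (hv : (v : PiLp 2 fun _ : Fin 2 => H) t = 0) :
      Φ (Matrix.cornerHom t a) v = 0 :=
    Subtype.ext <| PiLp.ext fun s => hE.apply_eq_zero_of_inner_single _ fun _ hv' _ hy =>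
      (hcp.inner_apply_cornerHom_eq_zero hpk hE.directed hproj a hv' (single_mem_E2 hy s) hv).2
  ext1 v
  calc Φ (Matrix.cornerHom t a) v
      = Φ (Matrix.cornerHom t a) (embD E hE.directed t (cmpD E hE.directed t v)) := by
        rw [← sub_eq_zero, ← map_sub]
        exact hker _ (by simp)
    _ = _ := Subtype.ext <| PiLp.ext fun s => by
        by_cases hs : s = t
        · subst hs; simp [cornerCompression_apply]
        · simp [hrange _ s hs, hs]

end CornerCompression

theorem statement_14_general {A : Type*} {Λ : Type*} [Ring A] [StarRing A] [Algebra ℂ A]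
    {p : Λ → A → ℝ}
    {pk : ∀ k : ℕ, Λ → Matrix (Fin k) (Fin k) A → ℝ}
    (hpk : IsMatrixCStarSeminormFamily p pk)
    {H : Type*} [NormedAddCommGroup H] [InnerProductSpace ℂ H]
    {E : ℕ → Submodule ℂ H} (hE : IsQuantizedFrechetDomain E)
    (Φ : Matrix (Fin 2) (Fin 2) A →ₗ[ℂ] (↥(⨆ n, E2 E n) →ₗ[ℂ] ↥(⨆ n, E2 E n)))
    (hmem : ∀ X, MemCStar (E2 E) (Φ X))
    (huni : Φ 1 = LinearMap.id)
    (hcp : IsLocalCP (pk2 pk) (E2 E) Φ)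
    (hcorner : ∀ v : ↥(⨆ n, E2 E n),
      (Φ (Matrix.of ![![(1 : A), 0], ![0, 0]]) v : PiLp 2 fun _ : Fin 2 => H) 0 =
        (v : PiLp 2 fun _ : Fin 2 => H) 0 ∧
      (Φ (Matrix.of ![![(1 : A), 0], ![0, 0]]) v : PiLp 2 fun _ : Fin 2 => H) 1 = 0) :
    ∃ φ₁ φ₂ : A →ₗ[ℂ] (↥(⨆ n, E n) →ₗ[ℂ] ↥(⨆ n, E n)),
      (∀ a, MemCStar E (φ₁ a)) ∧ (∀ a, MemCStar E (φ₂ a)) ∧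
      φ₁ 1 = LinearMap.id ∧ φ₂ 1 = LinearMap.id ∧
      IsLocalCP pk E φ₁ ∧ IsLocalCP pk E φ₂ ∧
      (∀ (a : A) (v : ↥(⨆ n, E2 E n)),
        (Φ (Matrix.of ![![a, 0], ![0, 0]]) v : PiLp 2 fun _ : Fin 2 => H) 0 =
          (φ₁ a (cmpD E hE.mono.directed_le 0 v) : H) ∧
        (Φ (Matrix.of ![![a, 0], ![0, 0]]) v : PiLp 2 fun _ : Fin 2 => H) 1 = 0) ∧
      (∀ (d : A) (v : ↥(⨆ n, E2 E n)),
        (Φ (Matrix.of ![![(0 : A), 0], ![0, d]]) v : PiLp 2 fun _ : Fin 2 => H) 0 = 0 ∧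
        (Φ (Matrix.of ![![(0 : A), 0], ![0, d]]) v : PiLp 2 fun _ : Fin 2 => H) 1 =
          (φ₂ d (cmpD E hE.mono.directed_le 1 v) : H)) := by
  have hD := hE.isQuantizedDomain
  have hproj0 : Φ (Matrix.cornerHom 0 1) = embD E hD.directed 0 ∘ₗ cmpD E hD.directed 0 := by
    ext1 v
    refine Subtype.ext (PiLp.ext fun s => ?_)
    fin_cases s
    · simpa [Matrix.cornerHom_zero_eq] using (hcorner v).1
    · simpa [Matrix.cornerHom_zero_eq] using (hcorner v).2
  have hproj1 : Φ (Matrix.cornerHom 1 1) = embD E hD.directed 1 ∘ₗ cmpD E hD.directed 1 := by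
    rw [Matrix.cornerHom_one_one, map_sub, huni, hproj0,
      ← embD_comp_cmpD_add hD.directed, add_sub_cancel_left]
  refine ⟨cornerCompression hD.directed Φ 0, cornerCompression hD.directed Φ 1,
    fun a => (hmem _).compress hD.directed 0, fun d => (hmem _).compress hD.directed 1,
    cornerCompression_one _ hproj0, cornerCompression_one _ hproj1,
    isLocalCP_cornerCompression hcp hpk _ 0, isLocalCP_cornerCompression hcp hpk _ 1,
    fun a v => ?_, fun d v => ?_⟩
  · rw [← Matrix.cornerHom_zero_eq, hcp.apply_cornerHom hpk hD hproj0]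
    simp
  · rw [← Matrix.cornerHom_one_eq, hcp.apply_cornerHom hpk hD hproj1]
    simp

theorem statement_14 {A : Type*} {Λ : Type*} [Ring A] [StarRing A] [Algebra ℂ A]
    [StarModule ℂ A] [Nonempty Λ] [UniformSpace A] [IsUniformAddGroup A] {p : Λ → A → ℝ}
    (hA : IsLocallyCStarAlgebra p)
    {pk : ∀ k : ℕ, Λ → Matrix (Fin k) (Fin k) A → ℝ}
    (hpk : IsMatrixCStarSeminormFamily p pk)
    {H : Type*} [NormedAddCommGroup H] [InnerProductSpace ℂ H] [CompleteSpace H]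
    {E : ℕ → Submodule ℂ H} (hE : IsQuantizedFrechetDomain E)
    (Φ : Matrix (Fin 2) (Fin 2) A →ₗ[ℂ] (↥(⨆ n, E2 E n) →ₗ[ℂ] ↥(⨆ n, E2 E n)))
    (hmem : ∀ X, MemCStar (E2 E) (Φ X))
    (huni : Φ 1 = LinearMap.id)
    (hcp : IsLocalCP (pk2 pk) (E2 E) Φ)
    (hcorner : ∀ v : ↥(⨆ n, E2 E n),
      (Φ (Matrix.of ![![(1 : A), 0], ![0, 0]]) v : PiLp 2 fun _ : Fin 2 => H) 0 =
        (v : PiLp 2 fun _ : Fin 2 => H) 0 ∧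
      (Φ (Matrix.of ![![(1 : A), 0], ![0, 0]]) v : PiLp 2 fun _ : Fin 2 => H) 1 = 0) :
    ∃ φ₁ φ₂ : A →ₗ[ℂ] (↥(⨆ n, E n) →ₗ[ℂ] ↥(⨆ n, E n)),
      (∀ a, MemCStar E (φ₁ a)) ∧ (∀ a, MemCStar E (φ₂ a)) ∧
      φ₁ 1 = LinearMap.id ∧ φ₂ 1 = LinearMap.id ∧
      IsLocalCP pk E φ₁ ∧ IsLocalCP pk E φ₂ ∧
      (∀ (a : A) (v : ↥(⨆ n, E2 E n)),
        (Φ (Matrix.of ![![a, 0], ![0, 0]]) v : PiLp 2 fun _ : Fin 2 => H) 0 =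
          (φ₁ a (cmpD E hE.mono.directed_le 0 v) : H) ∧
        (Φ (Matrix.of ![![a, 0], ![0, 0]]) v : PiLp 2 fun _ : Fin 2 => H) 1 = 0) ∧
      (∀ (d : A) (v : ↥(⨆ n, E2 E n)),
        (Φ (Matrix.of ![![(0 : A), 0], ![0, d]]) v : PiLp 2 fun _ : Fin 2 => H) 0 = 0 ∧
        (Φ (Matrix.of ![![(0 : A), 0], ![0, d]]) v : PiLp 2 fun _ : Fin 2 => H) 1 =
          (φ₂ d (cmpD E hE.mono.directed_le 1 v) : H)) :=
  statement_14_general hpk hE Φ hmem huni hcp hcorner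
end
end
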